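/- arXiv:1511.05514 — 4 statements merged into one kernel-verified Lean document; each statement's English description precedes it below -/
import Mathlib

section
/- Let U ⊆ V and M ⊆ U, and let S_j, S_k be edge sets of spanning trees of the complete graph on V such that the induced subgraph (V, S_j)[M] is disconnected, (V, S_k)[M] is connected, and |S_j ∩ δ(U \ M)| ≤ 1. Then there exist edges e ∈ S_j and f ∈ S_k such that S_j − e + f and S_k + e − f are both edge sets of spanning trees, e ∉ E[U], and f ∈ E[M]. -/
open Finset SimpleGraph

attribute [local instance 10] Classical.propDecidable

noncomputable section

namespace STT

variable {V : Type*} [Fintype V] [DecidableEq V]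

/-- `δ(U)`: the set of edges of the complete graph on `V` with exactly one endpoint in `U`. -/
def cutOf (U : Finset V) : Finset (Sym2 V) :=
  Finset.univ.filter fun e => ∃ u v : V, e = s(u, v) ∧ u ∈ U ∧ v ∉ U

/-- `E[U]`: the set of edges with both endpoints in `U`. -/
def within (U : Finset V) : Finset (Sym2 V) :=
  Finset.univ.filter fun e => ¬e.IsDiag ∧ ∀ v ∈ e, v ∈ U

/-- `x(F) := ∑_{e ∈ F} x_e`. -/
def xval (x : Sym2 V → ℝ) (F : Finset (Sym2 V)) : ℝ := ∑ e ∈ F, x e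

/-- characteristic vector `χ^S` of an edge set `S`. -/
def chi (S : Finset (Sym2 V)) : Sym2 V → ℝ := fun e => if e ∈ S then 1 else 0

/-- `S` is the edge set of a spanning tree of the complete graph on `V`. -/
def IsSpanningTree (S : Finset (Sym2 V)) : Prop :=
  (∀ e ∈ S, ¬e.IsDiag) ∧
    (SimpleGraph.fromEdgeSet (↑S : Set (Sym2 V))).Connected ∧
    S.card = Fintype.card V - 1

/-- the induced subgraph `(V,S)[M]` is connected. -/
def InducedConn (S : Finset (Sym2 V)) (M : Finset V) : Prop :=
  (SimpleGraph.induce (↑M : Set V) (SimpleGraph.fromEdgeSet (↑S : Set (Sym2 V)))).Connected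

/-- `x` is a feasible solution of the `s`-`t`-path LP. -/
def LPFeasible (s t : V) (x : Sym2 V → ℝ) : Prop :=
  (∀ e : Sym2 V, ¬e.IsDiag → 0 ≤ x e) ∧
    (∀ e : Sym2 V, e.IsDiag → x e = 0) ∧
    (∀ U : Finset V, U.Nonempty → U ≠ Finset.univ → Even (U ∩ {s, t}).card →
      2 ≤ xval x (cutOf U)) ∧
    (∀ U : Finset V, U.Nonempty → U ≠ Finset.univ → ¬Even (U ∩ {s, t}).card →
      1 ≤ xval x (cutOf U)) ∧
    (∀ v : V, v ≠ s → v ≠ t → xval x (cutOf {v}) = 2) ∧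
    xval x (cutOf {s}) = 1 ∧ xval x (cutOf {t}) = 1

/-- `C` is a narrow cut w.r.t. `x`. -/
def IsNarrowCut (x : Sym2 V → ℝ) (C : Finset (Sym2 V)) : Prop :=
  ∃ U : Finset V, U.Nonempty ∧ U ≠ Finset.univ ∧ C = cutOf U ∧ xval x C < 2

/-- property (★) for `x` w.r.t. `x*` and `ε`. -/
def StarProp (s t : V) (xstar : Sym2 V → ℝ) (ε : ℝ) (x : Sym2 V → ℝ) : Prop :=
  xval x (cutOf {s}) = 1 ∧ xval x (cutOf {t}) = 1 ∧
    ∀ F : Finset (Sym2 V), xval xstar F - ε ≤ xval x F ∧ xval x F ≤ xval xstar F + ε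

/-- `θ_i := ⌈r (2 − x*(C_i) − ε)⌉` where `C_i = δ(U_i)`. -/
def theta (r : ℕ) (xstar : Sym2 V → ℝ) (ε : ℝ) (U : ℕ → Finset V) (i : ℕ) : ℤ :=
  ⌈(r : ℝ) * (2 - xval xstar (cutOf (U i)) - ε)⌉

/-- `c(x) = ∑_{e={u,v}∈E} c(u,v) x_e` (each unordered pair counted once). -/
def cost (c : V → V → ℝ) (x : Sym2 V → ℝ) : ℝ :=
  (∑ u : V, ∑ v : V, c u v * x (s(u, v))) / 2

/-- the finset of all narrow cuts. -/
def NarrowCuts (xstar : Sym2 V → ℝ) : Finset (Finset (Sym2 V)) :=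
  Finset.univ.filter fun C => IsNarrowCut xstar C

/-- degree of `v` in the edge set `S`. -/
def degIn (S : Finset (Sym2 V)) (v : V) : ℕ := (S.filter fun e => v ∈ e).card

/-- `T_S`: vertices whose degree in `S` has the wrong parity. -/
def wrongParity (s t : V) (S : Finset (Sym2 V)) : Finset V :=
  Finset.univ.filter fun v =>
    if v = s ∨ v = t then Even (degIn S v) else ¬Even (degIn S v)

/-- `P` is the edge set of the (unique) `a`-`b`-path in `S`. -/
def IsPathEdges (a b : V) (S P : Finset (Sym2 V)) : Prop :=
  ∃ w : (SimpleGraph.fromEdgeSet (↑S : Set (Sym2 V))).Walk a b,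
    w.IsPath ∧ P = w.edges.toFinset

/-- the parity-correction vector `z^S` (for the `s`-`t`-path edge set `IS ⊆ S`). -/
def zvec (xstar : Sym2 V → ℝ) (β ε γS : ℝ) (eC : Finset (Sym2 V) → Sym2 V)
    (S IS : Finset (Sym2 V)) : Sym2 V → ℝ := fun g =>
  (1 - 2 * β) * γS * chi IS g +
    ∑ C ∈ (NarrowCuts xstar).filter (fun C => Even (S ∩ C).card),
      max 0 (β * (2 - xval xstar C - ε) - (1 - 2 * β) * γS) * chi {eC C} g

/-- the vector `y^S`. -/
def yvec (xstar : Sym2 V → ℝ) (β ε γS : ℝ) (eC : Finset (Sym2 V) → Sym2 V)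
    (S IS : Finset (Sym2 V)) : Sym2 V → ℝ := fun g =>
  β * (1 + ε) * xstar g + (1 - 2 * β) * chi (S \ IS) g + zvec xstar β ε γS eC S IS g

/-- the benefit `b_{S,C}`. -/
def benefit (xstar : Sym2 V → ℝ) (β ε γS : ℝ) (S C : Finset (Sym2 V)) : ℝ :=
  if (S ∩ C).card = 1 then 1 - γS
  else if Even (S ∩ C).card then min (β * (2 - xval xstar C - ε) / (1 - 2 * β)) γS
  else 0

set_option linter.unusedSectionVars false

/-- split lemma: a walk either survives deleting an edge, or the start reaches an endpoint
of the deleted edge. -/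
lemma walk_split {G : SimpleGraph V} (u v : V) :
    ∀ {x y : V}, G.Walk x y →
      (G.deleteEdges {s(u,v)}).Reachable x y ∨
      (G.deleteEdges {s(u,v)}).Reachable x u ∨ (G.deleteEdges {s(u,v)}).Reachable x v := by
  intro x y w
  induction w with
  | nil => exact Or.inl (Reachable.refl _)
  | @cons a c y hadj p ih =>
    by_cases he : s(a,c) = s(u,v)
    · rcases Sym2.eq_iff.mp he with ⟨rfl, rfl⟩ | ⟨rfl, rfl⟩
      · exact Or.inr (Or.inl (Reachable.refl _))
      · exact Or.inr (Or.inr (Reachable.refl _))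
    · have hD : (G.deleteEdges {s(u,v)}).Adj a c := by
        rw [deleteEdges_adj]
        exact ⟨hadj, by simpa using he⟩
      rcases ih with h | h | h
      · exact Or.inl (hD.reachable.trans h)
      · exact Or.inr (Or.inl (hD.reachable.trans h))
      · exact Or.inr (Or.inr (hD.reachable.trans h))

/-- from reachability, deleting an edge: reach one of its endpoints. -/
lemma reach_del {G : SimpleGraph V} {u v x : V} (h : G.Reachable x u) :
    (G.deleteEdges {s(u,v)}).Reachable x u ∨ (G.deleteEdges {s(u,v)}).Reachable x v := by
  obtain ⟨w⟩ := h
  rcases walk_split u v w with h | h | h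
  · exact Or.inl h
  · exact Or.inl h
  · exact Or.inr h

lemma conn_card_aux (n : ℕ) : ∀ (E : Finset (Sym2 V)), E.card = n →
    (SimpleGraph.fromEdgeSet (↑E : Set (Sym2 V))).Connected → Fintype.card V ≤ E.card + 1 := by
  induction n using Nat.strong_induction_on with
  | _ n ih =>
    intro E hcard hconn
    set G := SimpleGraph.fromEdgeSet (↑E : Set (Sym2 V)) with hG
    by_cases hbr : ∀ ⦃a b : V⦄, G.Adj a b → ¬(G.deleteEdges {s(a,b)}).Reachable a b
    · have hacyc : G.IsAcyclic := by
        rw [isAcyclic_iff_forall_adj_isBridge]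
        intro a b hab
        rw [isBridge_iff]
        exact hbr hab
      have htree : G.IsTree := ⟨hconn, hacyc⟩
      have h1 : G.edgeFinset.card + 1 = Fintype.card V := htree.card_edgeFinset
      have h2 : G.edgeFinset ⊆ E := by
        intro g hg
        rw [mem_edgeFinset, hG, edgeSet_fromEdgeSet] at hg
        exact_mod_cast hg.1
      have := Finset.card_le_card h2
      omega
    · push_neg at hbr
      obtain ⟨a, b, hab, hreach⟩ := hbr
      have hmem : s(a,b) ∈ E := by
        have := hab
        rw [hG, fromEdgeSet_adj] at this
        exact_mod_cast this.1
      set E' := E.erase s(a,b) with hE'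
      have hGE' : SimpleGraph.fromEdgeSet (↑E' : Set (Sym2 V)) = G.deleteEdges {s(a,b)} := by
        ext x y
        rw [fromEdgeSet_adj, deleteEdges_adj, hG, fromEdgeSet_adj]
        constructor
        · rintro ⟨hx, hxy⟩
          rw [Finset.coe_erase, Set.mem_diff] at hx
          exact ⟨⟨hx.1, hxy⟩, by simpa using hx.2⟩
        · rintro ⟨⟨hx, hxy⟩, hne⟩
          refine ⟨?_, hxy⟩
          rw [Finset.coe_erase, Set.mem_diff]
          exact ⟨hx, by simpa using hne⟩
      have hconn' : (SimpleGraph.fromEdgeSet (↑E' : Set (Sym2 V))).Connected := by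
        haveI : Nonempty V := hconn.nonempty
        rw [hGE']
        have hpre : (G.deleteEdges {s(a,b)}).Preconnected := by
          intro x y
          rcases reach_del (v := b) (hconn.preconnected x a) with hx | hx <;>
          rcases reach_del (v := b) (hconn.preconnected y a) with hy | hy
          · exact hx.trans hy.symm
          · exact (hx.trans hreach).trans hy.symm
          · exact (hx.trans hreach.symm).trans hy.symm
          · exact hx.trans hy.symm
        exact ⟨hpre⟩
      have hpos : 0 < E.card := Finset.card_pos.mpr ⟨_, hmem⟩
      have hlt : E'.card < n := by
        rw [hE', Finset.card_erase_of_mem hmem]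
        omega
      have := ih E'.card hlt E' rfl hconn'
      rw [hE', Finset.card_erase_of_mem hmem] at this
      omega

/-- a connected graph from a finite edge set has at least `card V - 1` edges. -/
lemma conn_card (E : Finset (Sym2 V))
    (hconn : (SimpleGraph.fromEdgeSet (↑E : Set (Sym2 V))).Connected) :
    Fintype.card V ≤ E.card + 1 :=
  conn_card_aux E.card E rfl hconn

/-- every edge of a spanning tree is a bridge. -/
lemma tree_bridge (E : Finset (Sym2 V))
    (hconn : (SimpleGraph.fromEdgeSet (↑E : Set (Sym2 V))).Connected)
    (hcard : E.card = Fintype.card V - 1) {u v : V}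
    (hadj : (SimpleGraph.fromEdgeSet (↑E : Set (Sym2 V))).Adj u v) :
    ¬((SimpleGraph.fromEdgeSet (↑E : Set (Sym2 V))).deleteEdges {s(u,v)}).Reachable u v := by
  intro hreach
  set G := SimpleGraph.fromEdgeSet (↑E : Set (Sym2 V)) with hG
  have hmem : s(u,v) ∈ E := by
    have := hadj; rw [hG, fromEdgeSet_adj] at this; exact_mod_cast this.1
  set E' := E.erase s(u,v) with hE'
  have hGE' : SimpleGraph.fromEdgeSet (↑E' : Set (Sym2 V)) = G.deleteEdges {s(u,v)} := by
    ext x y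
    rw [fromEdgeSet_adj, deleteEdges_adj, hG, fromEdgeSet_adj]
    constructor
    · rintro ⟨hx, hxy⟩
      rw [Finset.coe_erase, Set.mem_diff] at hx
      exact ⟨⟨hx.1, hxy⟩, by simpa using hx.2⟩
    · rintro ⟨⟨hx, hxy⟩, hne⟩
      refine ⟨?_, hxy⟩
      rw [Finset.coe_erase, Set.mem_diff]
      exact ⟨hx, by simpa using hne⟩
  have hconn' : (SimpleGraph.fromEdgeSet (↑E' : Set (Sym2 V))).Connected := by
    haveI : Nonempty V := ⟨u⟩
    rw [hGE']
    refine Connected.mk ?_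
    intro x y
    rcases reach_del (v := v) (hconn.preconnected x u) with hx | hx <;>
    rcases reach_del (v := v) (hconn.preconnected y u) with hy | hy
    · exact hx.trans hy.symm
    · exact (hx.trans hreach).trans hy.symm
    · exact (hx.trans hreach.symm).trans hy.symm
    · exact hx.trans hy.symm
  have h1 := conn_card E' hconn'
  have h2 : Nonempty V := ⟨u⟩
  have h3 : 0 < Fintype.card V := Fintype.card_pos
  rw [hE', Finset.card_erase_of_mem hmem, hcard] at h1
  have h4 : 2 ≤ Fintype.card V := Fintype.one_lt_card_iff.mpr ⟨u, v, hadj.ne⟩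
  omega



/-- deleting an edge of a simple path disconnects its endpoints (given all edges are bridges). -/
lemma path_sep {G : SimpleGraph V}
    (hbr : ∀ ⦃a b : V⦄, G.Adj a b → ¬(G.deleteEdges {s(a,b)}).Reachable a b) :
    ∀ {x y : V} (w : G.Walk x y), w.IsPath → ∀ {u v : V}, s(u,v) ∈ w.edges →
      ¬(G.deleteEdges {s(u,v)}).Reachable x y := by
  intro x y w
  induction w with
  | nil => intro _ u v he; simp at he
  | @cons a c y h p ih =>
    intro hw u v he hr
    have hnd := hw.edges_nodup
    rw [Walk.edges_cons, List.nodup_cons] at hnd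
    rw [Walk.edges_cons, List.mem_cons] at he
    rcases he with heq | hmem
    · have hp : ∀ e ∈ p.edges, e ∈ (G.deleteEdges {s(u,v)}).edgeSet := by
        intro e hee
        rw [edgeSet_deleteEdges]
        refine ⟨p.edges_subset_edgeSet hee, ?_⟩
        simp only [Set.mem_singleton_iff]
        intro hcontra
        rw [hcontra, heq] at hee
        exact hnd.1 hee
      have hcy : (G.deleteEdges {s(u,v)}).Reachable c y := (p.transfer _ hp).reachable
      have hxc : (G.deleteEdges {s(u,v)}).Reachable a c := hr.trans hcy.symm
      rw [heq] at hxc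
      exact hbr h hxc
    · have hne : s(a,c) ≠ s(u,v) := fun hcontra => hnd.1 (hcontra ▸ hmem)
      have hD : (G.deleteEdges {s(u,v)}).Adj a c := by
        rw [deleteEdges_adj]; exact ⟨h, by simpa using hne⟩
      exact ih hw.of_cons hmem (hD.symm.reachable.trans hr)

/-- the `shift` lemma: moving the reachability invariant along consecutive tree edges. -/
lemma shift {G : SimpleGraph V} (hpre : G.Preconnected)
    (hbr : ∀ ⦃a b : V⦄, G.Adj a b → ¬(G.deleteEdges {s(a,b)}).Reachable a b)
    {x z z₁ w : V} (hxz : G.Adj x z) (hzz₁ : G.Adj z z₁) (hne : x ≠ z₁)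
    (hw : (G.deleteEdges {s(x,z)}).Reachable w x) :
    (G.deleteEdges {s(z,z₁)}).Reachable w z := by
  by_contra hc
  have hef : s(x,z) ≠ s(z,z₁) := by
    intro hcontra
    rw [Sym2.eq_iff] at hcontra
    rcases hcontra with ⟨h1, h2⟩ | ⟨h1, h2⟩
    · exact hzz₁.ne h2
    · exact hne h1
  have hwz₁ : (G.deleteEdges {s(z,z₁)}).Reachable w z₁ := by
    rcases reach_del (v := z₁) (hpre w z) with h | h
    · exact absurd h hc
    · exact h
  obtain ⟨ω⟩ := hwz₁
  rcases walk_split x z ω with h | h | h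
  · -- w ~ z₁ in G - both edges ⊆ G - s(x,z)
    have h1 : (G.deleteEdges {s(z,z₁)}).deleteEdges {s(x,z)} ≤ G.deleteEdges {s(x,z)} := by
      intro a b hab
      rw [deleteEdges_adj] at hab ⊢
      rw [deleteEdges_adj] at hab
      exact ⟨hab.1.1, hab.2⟩
    have h2 : (G.deleteEdges {s(x,z)}).Adj z z₁ := by
      rw [deleteEdges_adj]
      refine ⟨hzz₁, ?_⟩
      simp only [Set.mem_singleton_iff]
      exact fun hcontra => hef hcontra.symm
    have h3 : (G.deleteEdges {s(x,z)}).Reachable w z := (h.mono h1).trans h2.symm.reachable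
    exact hbr hxz (hw.symm.trans h3)
  · -- w ~ x in G - both ⊆ G - s(z,z₁): then x ~ z there
    have h1 : (G.deleteEdges {s(z,z₁)}).deleteEdges {s(x,z)} ≤ G.deleteEdges {s(z,z₁)} := by
      intro a b hab
      rw [deleteEdges_adj] at hab
      exact hab.1
    have h2 : (G.deleteEdges {s(z,z₁)}).Adj x z := by
      rw [deleteEdges_adj]
      exact ⟨hxz, by simpa using hef⟩
    exact hc ((h.mono h1).trans h2.reachable)
  · have h1 : (G.deleteEdges {s(z,z₁)}).deleteEdges {s(x,z)} ≤ G.deleteEdges {s(z,z₁)} := by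
      intro a b hab
      rw [deleteEdges_adj] at hab
      exact hab.1
    exact hc (h.mono h1)

/-- the chain induction: if every edge on a path has `π`-endpoints reachable after deleting it,
we reach a contradiction at the end of the path. -/
lemma chain {G : SimpleGraph V} (hpre : G.Preconnected)
    (hbr : ∀ ⦃a b : V⦄, G.Adj a b → ¬(G.deleteEdges {s(a,b)}).Reachable a b)
    (π : V → V) :
    ∀ {z y : V} (w : G.Walk z y), w.IsPath → π y = y →
      (∀ p q, s(p,q) ∈ w.edges → (G.deleteEdges {s(p,q)}).Reachable (π p) (π q)) →
      ∀ x, G.Adj x z → x ∉ w.support → (G.deleteEdges {s(x,z)}).Reachable (π z) x → False := by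
  intro z y w
  induction w with
  | @nil z =>
    intro _ hπ _ x hadj _ hQ
    rw [hπ] at hQ
    exact hbr hadj hQ.symm
  | @cons z z₁ y h p ih =>
    intro hw hπ hHQ x hadj hxs hQ
    have hxne : x ≠ z₁ := by
      intro hcontra
      exact hxs (by rw [Walk.support_cons]; exact List.mem_cons_of_mem _ (hcontra ▸ p.start_mem_support))
    have hs : (G.deleteEdges {s(z,z₁)}).Reachable (π z) z := shift hpre hbr hadj h hxne hQ
    have hh : (G.deleteEdges {s(z,z₁)}).Reachable (π z) (π z₁) :=
      hHQ z z₁ (by rw [Walk.edges_cons]; exact List.mem_cons_self)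
    have hQ' : (G.deleteEdges {s(z,z₁)}).Reachable (π z₁) z := hh.symm.trans hs
    have hzs : z ∉ p.support := ((Walk.cons_isPath_iff h p).mp hw).2
    exact ih hw.of_cons hπ
      (fun p' q' hm => hHQ p' q' (by rw [Walk.edges_cons]; exact List.mem_cons_of_mem _ hm))
      z h hzs hQ'

/-- along a walk whose endpoints are not `G'`-reachable, some edge has non-`G'`-reachable ends. -/
lemma sidechange {H G' : SimpleGraph V} :
    ∀ {a b : V} (w : H.Walk a b), ¬G'.Reachable a b →
      ∃ p q, s(p,q) ∈ w.edges ∧ ¬G'.Reachable p q := by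
  intro a b w
  induction w with
  | nil => intro hn; exact absurd (Reachable.refl _) hn
  | @cons a c b h p ih =>
    intro hn
    by_cases hr : G'.Reachable a c
    · obtain ⟨p', q', hm, hnr⟩ := ih (fun hct => hn (hr.trans hct))
      exact ⟨p', q', by rw [Walk.edges_cons]; exact List.mem_cons_of_mem _ hm, hnr⟩
    · exact ⟨a, c, by rw [Walk.edges_cons]; exact List.mem_cons_self, hr⟩




lemma mem_within {M : Finset V} {x y : V} :
    s(x,y) ∈ within M ↔ x ≠ y ∧ x ∈ M ∧ y ∈ M := by
  simp only [within, Finset.mem_filter, Finset.mem_univ, true_and, Sym2.mk_isDiag_iff]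
  constructor
  · rintro ⟨hne, hall⟩
    exact ⟨hne, hall x (by rw [Sym2.mem_iff]; left; rfl), hall y (by rw [Sym2.mem_iff]; right; rfl)⟩
  · rintro ⟨hne, hx, hy⟩
    refine ⟨hne, fun v hv => ?_⟩
    rcases Sym2.mem_iff.mp hv with rfl | rfl
    · exact hx
    · exact hy

lemma mem_cutOf {D : Finset V} {x y : V} (hx : x ∈ D) (hy : y ∉ D) :
    s(x,y) ∈ cutOf D := by
  simp only [cutOf, Finset.mem_filter, Finset.mem_univ, true_and]
  exact ⟨x, y, rfl, hx, hy⟩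

/-- a walk from inside `D` to outside `D` contains a cut edge. -/
lemma cross_exists {G : SimpleGraph V} {D : Finset V} :
    ∀ {z y : V} (w : G.Walk z y), z ∈ D → y ∉ D → ∃ g ∈ w.edges, g ∈ cutOf D := by
  intro z y w
  induction w with
  | nil => intro hz hy; exact absurd hz hy
  | @cons z c y h p ih =>
    intro hz hy
    by_cases hc : c ∈ D
    · obtain ⟨g, hg, hgc⟩ := ih hc hy
      exact ⟨g, by rw [Walk.edges_cons]; exact List.mem_cons_of_mem _ hg, hgc⟩
    · exact ⟨s(z,c), by rw [Walk.edges_cons]; exact List.mem_cons_self, mem_cutOf hz hc⟩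

/-- every vertex reaches an `M`-vertex avoiding all edges inside `M`. -/
lemma exists_pi {Sk : Finset (Sym2 V)} {M : Finset V} :
    ∀ {x m₀ : V}, (SimpleGraph.fromEdgeSet (↑Sk : Set (Sym2 V))).Walk x m₀ → m₀ ∈ M →
      ∃ m ∈ M, (SimpleGraph.fromEdgeSet (↑(Sk \ within M) : Set (Sym2 V))).Reachable x m := by
  intro x m₀ w
  induction w with
  | nil => intro hm; exact ⟨_, hm, Reachable.refl _⟩
  | @cons x c y h p ih =>
    intro hm
    by_cases hx : x ∈ M
    · exact ⟨x, hx, Reachable.refl _⟩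
    · obtain ⟨m, hmM, hre⟩ := ih hm
      have hadj : (SimpleGraph.fromEdgeSet (↑(Sk \ within M) : Set (Sym2 V))).Adj x c := by
        rw [fromEdgeSet_adj] at h ⊢
        refine ⟨?_, h.2⟩
        rw [Finset.coe_sdiff, Set.mem_diff]
        refine ⟨h.1, fun hcontra => ?_⟩
        rw [Finset.mem_coe, mem_within] at hcontra
        exact hx hcontra.2.1
      exact ⟨m, hmM, hadj.reachable.trans hre⟩

/-- reachability inside `M` in the induced graph transfers to the within-`M` edge graph. -/
lemma lift_from_induce {Sk : Finset (Sym2 V)} {M : Finset V} :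
    ∀ {a b : ↥(↑M : Set V)},
      (SimpleGraph.induce (↑M : Set V) (SimpleGraph.fromEdgeSet (↑Sk : Set (Sym2 V)))).Walk a b →
      (SimpleGraph.fromEdgeSet (↑(Sk ∩ within M) : Set (Sym2 V))).Reachable ↑a ↑b := by
  intro a b w
  induction w with
  | nil => exact Reachable.refl _
  | @cons a c y h p ih =>
    have hadj : (SimpleGraph.fromEdgeSet (↑(Sk ∩ within M) : Set (Sym2 V))).Adj ↑a ↑c := by
      have h' : (SimpleGraph.fromEdgeSet (↑Sk : Set (Sym2 V))).Adj ↑a ↑c := h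
      rw [fromEdgeSet_adj] at h' ⊢
      refine ⟨?_, h'.2⟩
      rw [Finset.mem_coe, Finset.mem_inter]
      refine ⟨by exact_mod_cast h'.1, ?_⟩
      rw [mem_within]
      exact ⟨h'.2, a.2, c.2⟩
    exact hadj.reachable.trans ih

/-- reachability in the within-`M` edge graph lifts to the induced graph. -/
lemma lift_to_induce {Sj : Finset (Sym2 V)} {M : Finset V} :
    ∀ {x y : V}, (SimpleGraph.fromEdgeSet (↑(Sj ∩ within M) : Set (Sym2 V))).Walk x y →
      ∀ (hx : x ∈ M), ∃ hy : y ∈ M,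
      (SimpleGraph.induce (↑M : Set V) (SimpleGraph.fromEdgeSet (↑Sj : Set (Sym2 V)))).Reachable
        ⟨x, hx⟩ ⟨y, hy⟩ := by
  intro x y w
  induction w with
  | nil => intro hx; exact ⟨hx, Reachable.refl _⟩
  | @cons x c y h p ih =>
    intro hx
    rw [fromEdgeSet_adj, Finset.mem_coe, Finset.mem_inter, mem_within] at h
    have hc : c ∈ M := h.1.2.2.2
    obtain ⟨hy, hre⟩ := ih hc
    have hadj : (SimpleGraph.induce (↑M : Set V)
        (SimpleGraph.fromEdgeSet (↑Sj : Set (Sym2 V)))).Adj ⟨x, hx⟩ ⟨c, hc⟩ := by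
      simp only [comap_adj, Function.Embedding.coe_subtype, fromEdgeSet_adj]
      exact ⟨by exact_mod_cast h.1.1, h.2⟩
    exact ⟨hy, hadj.reachable.trans hre⟩

/-- a walk staying inside `M` yields reachability in the within-`M` edge graph. -/
lemma reach_within {Sj : Finset (Sym2 V)} {M : Finset V} :
    ∀ {x y : V}, (w : (SimpleGraph.fromEdgeSet (↑Sj : Set (Sym2 V))).Walk x y) →
      (∀ v ∈ w.support, v ∈ M) →
      (SimpleGraph.fromEdgeSet (↑(Sj ∩ within M) : Set (Sym2 V))).Reachable x y := by
  intro x y w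
  induction w with
  | nil => intro _; exact Reachable.refl _
  | @cons x c y h p ih =>
    intro hall
    have hx : x ∈ M := hall x (by rw [Walk.support_cons]; exact List.mem_cons_self)
    have hc : c ∈ M := hall c
      (by rw [Walk.support_cons]; exact List.mem_cons_of_mem _ p.start_mem_support)
    have hadj : (SimpleGraph.fromEdgeSet (↑(Sj ∩ within M) : Set (Sym2 V))).Adj x c := by
      rw [fromEdgeSet_adj] at h ⊢
      refine ⟨?_, h.2⟩
      rw [Finset.mem_coe, Finset.mem_inter]
      exact ⟨by exact_mod_cast h.1, mem_within.mpr ⟨h.2, hx, hc⟩⟩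
    exact hadj.reachable.trans (ih fun v hv =>
      hall v (by rw [Walk.support_cons]; exact List.mem_cons_of_mem _ hv))

/-- extract the tail of a run: a path from `z ∉ M` to the first `M`-vertex. -/
lemma run_tail {G : SimpleGraph V} {M : Finset V} :
    ∀ {z b : V} (w : G.Walk z b), w.IsPath → z ∉ M → b ∈ M →
      ∃ (xr : V) (w' : G.Walk z xr), w'.IsPath ∧ xr ∈ M ∧
        (∀ v ∈ w'.support, v ≠ xr → v ∉ M) ∧ (∀ v ∈ w'.support, v ∈ w.support) := by
  intro z b w
  induction w with
  | nil => intro _ hz hb; exact absurd hb hz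
  | @cons z c b h p ih =>
    intro hw hz hb
    by_cases hc : c ∈ M
    · refine ⟨c, Walk.cons h Walk.nil, ?_, hc, ?_, ?_⟩
      · rw [Walk.cons_isPath_iff]
        exact ⟨Walk.IsPath.nil, by simp [h.ne]⟩
      · intro v hv hvne
        simp only [Walk.support_cons, Walk.support_nil, List.mem_cons, List.mem_singleton] at hv
        rcases hv with rfl | rfl | h'
        · exact hz
        · exact absurd rfl hvne
        · exact absurd h' (List.not_mem_nil)
      · intro v hv
        simp only [Walk.support_cons, Walk.support_nil, List.mem_cons, List.mem_singleton] at hv ⊢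
        rcases hv with rfl | rfl | h'
        · left; rfl
        · right; exact (p.start_mem_support)
        · exact absurd h' (List.not_mem_nil)
    · obtain ⟨xr, t', ht'p, hxr, hint, hsub⟩ := ih hw.of_cons hc hb
      refine ⟨xr, Walk.cons h t', ?_, hxr, ?_, ?_⟩
      · rw [Walk.cons_isPath_iff]
        refine ⟨ht'p, fun hcontra => ?_⟩
        exact ((Walk.cons_isPath_iff h p).mp hw).2 (hsub z hcontra)
      · intro v hv hvne
        rw [Walk.support_cons, List.mem_cons] at hv
        rcases hv with rfl | hv
        · exact hz
        · exact hint v hv hvne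
      · intro v hv
        rw [Walk.support_cons, List.mem_cons] at hv
        rw [Walk.support_cons, List.mem_cons]
        rcases hv with rfl | hv
        · left; rfl
        · right; exact hsub v hv

/-- extract a run through the complement of `M` from a path between `M`-vertices. -/
lemma seg {G : SimpleGraph V} {M : Finset V} :
    ∀ {a b : V} (w : G.Walk a b), w.IsPath → a ∈ M → b ∈ M → (∃ v ∈ w.support, v ∉ M) →
      ∃ (x₀ w₁ xr : V) (hadj : G.Adj x₀ w₁) (t' : G.Walk w₁ xr),
        (Walk.cons hadj t').IsPath ∧ x₀ ∈ M ∧ xr ∈ M ∧ w₁ ∉ M ∧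
        (∀ v ∈ t'.support, v ≠ xr → v ∉ M) ∧
        (∀ v ∈ (Walk.cons hadj t').support, v ∈ w.support) := by
  intro a b w
  induction w with
  | nil =>
    intro _ ha _ hex
    obtain ⟨v, hv, hvM⟩ := hex
    rw [Walk.support_nil, List.mem_singleton] at hv
    exact absurd (hv ▸ ha) hvM
  | @cons a c b h p ih =>
    intro hw ha hb hex
    by_cases hc : c ∈ M
    · have hex' : ∃ v ∈ p.support, v ∉ M := by
        obtain ⟨v, hv, hvM⟩ := hex
        rw [Walk.support_cons, List.mem_cons] at hv
        rcases hv with rfl | hv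
        · exact absurd ha hvM
        · exact ⟨v, hv, hvM⟩
      obtain ⟨x₀, w₁, xr, hadj, t', h1, h2, h3, h4, h5, h6⟩ := ih hw.of_cons hc hb hex'
      exact ⟨x₀, w₁, xr, hadj, t', h1, h2, h3, h4, h5, fun v hv =>
        (by rw [Walk.support_cons]; exact List.mem_cons_of_mem _ (h6 v hv))⟩
    · obtain ⟨xr, t', ht'p, hxr, hint, hsub⟩ := run_tail p hw.of_cons hc hb
      refine ⟨a, c, xr, h, t', ?_, ha, hxr, hc, hint, ?_⟩
      · rw [Walk.cons_isPath_iff]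
        refine ⟨ht'p, fun hcontra => ?_⟩
        exact ((Walk.cons_isPath_iff h p).mp hw).2 (hsub a hcontra)
      · intro v hv
        rw [Walk.support_cons, List.mem_cons] at hv
        rw [Walk.support_cons, List.mem_cons]
        rcases hv with rfl | hv
        · left; rfl
        · right; exact hsub v hv


theorem stmt7 {V : Type*} [Fintype V] [DecidableEq V]
    (U M : Finset V) (hMU : M ⊆ U)
    (Sj Sk : Finset (Sym2 V)) (hSj : IsSpanningTree Sj) (hSk : IsSpanningTree Sk)
    (hdisc : ¬InducedConn Sj M) (hconn : InducedConn Sk M)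
    (hcut : (Sj ∩ cutOf (U \ M)).card ≤ 1) :
    ∃ e ∈ Sj, ∃ f ∈ Sk,
      IsSpanningTree (insert f (Sj.erase e)) ∧
      IsSpanningTree (insert e (Sk.erase f)) ∧
      e ∉ within U ∧ f ∈ within M := by
  classical
  obtain ⟨hSjnd, hSjconn, hSjcard⟩ := hSj
  obtain ⟨hSknd, hSkconn, hSkcard⟩ := hSk
  set SjG := SimpleGraph.fromEdgeSet (↑Sj : Set (Sym2 V)) with hSjGdef
  set SkG := SimpleGraph.fromEdgeSet (↑Sk : Set (Sym2 V)) with hSkGdef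
  set FkG := SimpleGraph.fromEdgeSet (↑(Sk ∩ within M) : Set (Sym2 V)) with hFkGdef
  set GppG := SimpleGraph.fromEdgeSet (↑(Sk \ within M) : Set (Sym2 V)) with hGppdef
  have hconn' : (SimpleGraph.induce (↑M : Set V) SkG).Connected := hconn
  haveI hMne : Nonempty ↥(↑M : Set V) := hconn'.nonempty
  obtain ⟨⟨m₀, hm₀s⟩⟩ := id hMne
  have hm₀ : m₀ ∈ M := hm₀s
  haveI : Nonempty V := ⟨m₀⟩
  have hbrSj : ∀ ⦃x y : V⦄, SjG.Adj x y → ¬(SjG.deleteEdges {s(x,y)}).Reachable x y :=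
    fun x y hadj => tree_bridge Sj hSjconn hSjcard hadj
  have hbrSk : ∀ ⦃x y : V⦄, SkG.Adj x y → ¬(SkG.deleteEdges {s(x,y)}).Reachable x y :=
    fun x y hadj => tree_bridge Sk hSkconn hSkcard hadj
  -- a canonical `M`-attachment map π
  have hpi : ∀ x : V, ∃ m ∈ M, GppG.Reachable x m :=
    fun x => exists_pi (hSkconn.preconnected x m₀).some hm₀
  set π : V → V := fun x => (hpi x).choose with hπdef
  have hπM : ∀ x, π x ∈ M := fun x => (hpi x).choose_spec.1
  have hπr : ∀ x, GppG.Reachable x (π x) := fun x => (hpi x).choose_spec.2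
  have hFk : ∀ m ∈ M, ∀ m' ∈ M, FkG.Reachable m m' := by
    intro m hm m' hm'
    obtain ⟨w⟩ := hconn'.preconnected ⟨m, Finset.mem_coe.mpr hm⟩ ⟨m', Finset.mem_coe.mpr hm'⟩
    exact lift_from_induce w
  have hGpple : ∀ {f : Sym2 V}, f ∈ within M → GppG ≤ SkG.deleteEdges {f} := by
    intro f hf x y hxy
    rw [hGppdef, fromEdgeSet_adj] at hxy
    rw [deleteEdges_adj, hSkGdef, fromEdgeSet_adj]
    obtain ⟨hx1, hx2⟩ := hxy
    rw [Finset.coe_sdiff, Set.mem_diff] at hx1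
    refine ⟨⟨hx1.1, hx2⟩, ?_⟩
    simp only [Set.mem_singleton_iff]
    exact fun hc => hx1.2 (hc ▸ (Finset.mem_coe.mpr hf))
  have huniq : ∀ m ∈ M, ∀ m' ∈ M, GppG.Reachable m m' → m = m' := by
    intro m hm m' hm' hre
    by_contra hne
    obtain ⟨ω₀⟩ := hFk m hm m' hm'
    obtain ⟨p', q', hmem, -⟩ := sidechange (G' := (⊥ : SimpleGraph V)) ω₀.toPath.val
      (by rw [reachable_bot]; exact hne)
    have hfE : s(p',q') ∈ FkG.edgeSet := ω₀.toPath.val.edges_subset_edgeSet hmem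
    rw [hFkGdef, edgeSet_fromEdgeSet] at hfE
    have hfin : s(p',q') ∈ Sk ∩ within M := by exact_mod_cast hfE.1
    have hfW : s(p',q') ∈ within M := (Finset.mem_inter.mp hfin).2
    have htr : ∀ g ∈ ω₀.toPath.val.edges, g ∈ SkG.edgeSet := by
      intro g hg
      have hgE := ω₀.toPath.val.edges_subset_edgeSet hg
      rw [hFkGdef, edgeSet_fromEdgeSet] at hgE
      rw [hSkGdef, edgeSet_fromEdgeSet]
      have hgin : g ∈ Sk ∩ within M := by exact_mod_cast hgE.1
      exact ⟨by exact_mod_cast (Finset.mem_inter.mp hgin).1, hgE.2⟩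
    have hsep : ¬(SkG.deleteEdges {s(p',q')}).Reachable m m' :=
      path_sep hbrSk (ω₀.toPath.val.transfer SkG htr) (ω₀.toPath.property.transfer htr)
        (by rw [Walk.edges_transfer]; exact hmem)
    exact hsep (hre.mono (hGpple hfW))
  have hπid : ∀ m ∈ M, π m = m := fun m hm => (huniq m hm (π m) (hπM m) (hπr m)).symm
  -- disconnected components of Sj in M
  have hdisc' : ¬(SimpleGraph.induce (↑M : Set V) SjG).Connected := hdisc
  have hnpre : ¬(SimpleGraph.induce (↑M : Set V) SjG).Preconnected := by
    intro hpre
    exact hdisc' ⟨hpre⟩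
  rw [SimpleGraph.Preconnected] at hnpre
  push_neg at hnpre
  obtain ⟨a', b', hnr'⟩ := hnpre
  have haM : (a' : V) ∈ M := a'.2
  have hbM : (b' : V) ∈ M := b'.2
  have hnrF : ¬(SimpleGraph.fromEdgeSet (↑(Sj ∩ within M) : Set (Sym2 V))).Reachable ↑a' ↑b' := by
    intro h
    obtain ⟨wk⟩ := h
    obtain ⟨hy, hre⟩ := lift_to_induce wk a'.2
    exact hnr' hre
  -- a path from a' to b' in Sj
  obtain ⟨w0⟩ := hSjconn.preconnected ↑a' ↑b'
  have hwp : w0.toPath.val.IsPath := w0.toPath.property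
  set w : SjG.Walk ↑a' ↑b' := w0.toPath.val with hwdef
  -- the path avoids U \ M
  have hND : ∀ v ∈ w.support, v ∉ U \ M := by
    intro v hv hvD
    have hw12 := w.take_spec hv
    have haD : (a' : V) ∉ (U \ M : Finset V) := fun hc => (Finset.mem_sdiff.mp hc).2 haM
    have hbD : (b' : V) ∉ (U \ M : Finset V) := fun hc => (Finset.mem_sdiff.mp hc).2 hbM
    obtain ⟨g₂, hg₂e, hg₂c⟩ := cross_exists (w.dropUntil v hv) hvD hbD
    obtain ⟨g₁, hg₁e, hg₁c⟩ := cross_exists (w.takeUntil v hv).reverse hvD haD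
    rw [Walk.edges_reverse, List.mem_reverse] at hg₁e
    have hedges : (w.takeUntil v hv).edges ++ (w.dropUntil v hv).edges = w.edges := by
      rw [← Walk.edges_append, hw12]
    have hnd : ((w.takeUntil v hv).edges ++ (w.dropUntil v hv).edges).Nodup := by
      rw [hedges]; exact hwp.edges_nodup
    have hne12 : g₁ ≠ g₂ := by
      intro hcontra
      rw [List.nodup_append] at hnd
      exact hnd.2.2 _ hg₁e _ hg₂e hcontra
    have hg₁Sj : g₁ ∈ Sj := by
      have := (w.takeUntil v hv).edges_subset_edgeSet hg₁e
      rw [hSjGdef, edgeSet_fromEdgeSet] at this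
      exact_mod_cast this.1
    have hg₂Sj : g₂ ∈ Sj := by
      have := (w.dropUntil v hv).edges_subset_edgeSet hg₂e
      rw [hSjGdef, edgeSet_fromEdgeSet] at this
      exact_mod_cast this.1
    have hsubs : ({g₁, g₂} : Finset (Sym2 V)) ⊆ Sj ∩ cutOf (U \ M) := by
      intro g hg
      rcases Finset.mem_insert.mp hg with rfl | hg
      · exact Finset.mem_inter.mpr ⟨hg₁Sj, hg₁c⟩
      · rw [Finset.mem_singleton] at hg
        subst hg
        exact Finset.mem_inter.mpr ⟨hg₂Sj, hg₂c⟩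
    have hcard2 := Finset.card_le_card hsubs
    rw [Finset.card_insert_of_notMem (by simpa using hne12), Finset.card_singleton] at hcard2
    omega
  -- some vertex of the path is outside M
  have hWit : ∃ v ∈ w.support, v ∉ M := by
    by_contra hall
    push_neg at hall
    exact hnrF (reach_within w hall)
  obtain ⟨x₀, w₁v, xr, hadj0, t', hpathc, hx₀M, hxrM, hw₁M, hint, hsubsup⟩ :=
    seg w hwp haM hbM hWit
  -- every edge of the run has an endpoint outside U
  have hedgeW : ∀ p q : V, s(p,q) ∈ (Walk.cons hadj0 t').edges → ¬(p ∈ U ∧ q ∈ U) := by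
    rintro p q hm ⟨hpU, hqU⟩
    have hndW : ∀ v ∈ (Walk.cons hadj0 t').support, v ∉ U \ M :=
      fun v hv => hND v (hsubsup v hv)
    rw [Walk.edges_cons, List.mem_cons] at hm
    rcases hm with heq | hm
    · have hw₁U : w₁v ∈ U := by
        rcases Sym2.eq_iff.mp heq.symm with ⟨h1, h2⟩ | ⟨h1, h2⟩
        · exact h2 ▸ hqU
        · exact h2 ▸ hpU
      exact hndW w₁v
        (by rw [Walk.support_cons]; exact List.mem_cons_of_mem _ t'.start_mem_support)
        (Finset.mem_sdiff.mpr ⟨hw₁U, hw₁M⟩)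
    · have hps : p ∈ t'.support := t'.fst_mem_support_of_mem_edges hm
      have hqs : q ∈ t'.support := t'.snd_mem_support_of_mem_edges hm
      have hpqne : p ≠ q := (t'.adj_of_mem_edges hm).ne
      by_cases hpxr : p = xr
      · have hq : q ∉ M := hint q hqs (fun hc => hpqne (hpxr.trans hc.symm))
        exact hndW q (by rw [Walk.support_cons]; exact List.mem_cons_of_mem _ hqs)
          (Finset.mem_sdiff.mpr ⟨hqU, hq⟩)
      · have hp : p ∉ M := hint p hps hpxr
        exact hndW p (by rw [Walk.support_cons]; exact List.mem_cons_of_mem _ hps)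
          (Finset.mem_sdiff.mpr ⟨hpU, hp⟩)
  -- find the distinguished edge e = s(p,q)
  by_cases hEx : ∃ p q : V, s(p,q) ∈ (Walk.cons hadj0 t').edges ∧
      ¬(SjG.deleteEdges {s(p,q)}).Reachable (π p) (π q)
  swap
  · exfalso
    push_neg at hEx
    refine chain hSjconn.preconnected hbrSj π t' hpathc.of_cons (hπid xr hxrM)
      (fun p q hm => hEx p q (by rw [Walk.edges_cons]; exact List.mem_cons_of_mem _ hm))
      x₀ hadj0 ((Walk.cons_isPath_iff hadj0 t').mp hpathc).2 ?_
    have h0 := hEx x₀ w₁v (by rw [Walk.edges_cons]; exact List.mem_cons_self)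
    rw [hπid x₀ hx₀M] at h0
    exact h0.symm
  obtain ⟨p, q, hmemE, hnre⟩ := hEx
  have hepq : SjG.Adj p q := (Walk.cons hadj0 t').adj_of_mem_edges hmemE
  have hpqne : p ≠ q := hepq.ne
  have heSj : s(p,q) ∈ Sj := by
    have := (Walk.cons hadj0 t').edges_subset_edgeSet hmemE
    rw [hSjGdef, edgeSet_fromEdgeSet] at this
    exact_mod_cast this.1
  have hnUpq : ¬(p ∈ U ∧ q ∈ U) := hedgeW p q hmemE
  -- find f = s(u,v) on the Fk-path between π p and π q
  obtain ⟨ω₀⟩ := hFk _ (hπM p) _ (hπM q)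
  obtain ⟨u, v, hfmem, hnuv⟩ := sidechange (G' := SjG.deleteEdges {s(p,q)}) ω₀.toPath.val hnre
  have hfE : s(u,v) ∈ FkG.edgeSet := ω₀.toPath.val.edges_subset_edgeSet hfmem
  rw [hFkGdef, edgeSet_fromEdgeSet] at hfE
  have hfin : s(u,v) ∈ Sk ∩ within M := by exact_mod_cast hfE.1
  have hfSk : s(u,v) ∈ Sk := (Finset.mem_inter.mp hfin).1
  have hfW : s(u,v) ∈ within M := (Finset.mem_inter.mp hfin).2
  have huvne : u ≠ v := (mem_within.mp hfW).1
  have htr : ∀ g ∈ ω₀.toPath.val.edges, g ∈ SkG.edgeSet := by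
    intro g hg
    have hgE := ω₀.toPath.val.edges_subset_edgeSet hg
    rw [hFkGdef, edgeSet_fromEdgeSet] at hgE
    rw [hSkGdef, edgeSet_fromEdgeSet]
    have hgin : g ∈ Sk ∩ within M := by exact_mod_cast hgE.1
    exact ⟨by exact_mod_cast (Finset.mem_inter.mp hgin).1, hgE.2⟩
  have hsep : ¬(SkG.deleteEdges {s(u,v)}).Reachable (π p) (π q) :=
    path_sep hbrSk (ω₀.toPath.val.transfer SkG htr) (ω₀.toPath.property.transfer htr)
      (by rw [Walk.edges_transfer]; exact hfmem)
  have hβ : ¬(SkG.deleteEdges {s(u,v)}).Reachable p q := by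
    intro h
    exact hsep ((((hπr p).mono (hGpple hfW)).symm.trans h).trans ((hπr q).mono (hGpple hfW)))
  have hef_ne : s(p,q) ≠ s(u,v) := by
    intro hcontra
    have hin : s(p,q) ∈ within M := hcontra ▸ hfW
    rw [mem_within] at hin
    exact hnUpq ⟨hMU hin.2.1, hMU hin.2.2⟩
  have hfSj : s(u,v) ∉ Sj := by
    intro hc
    apply hnuv
    apply Adj.reachable
    rw [deleteEdges_adj, hSjGdef, fromEdgeSet_adj]
    refine ⟨⟨Finset.mem_coe.mpr hc, huvne⟩, ?_⟩
    simp only [Set.mem_singleton_iff]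
    exact fun hcontra => hef_ne hcontra.symm
  have heSk : s(p,q) ∉ Sk := by
    intro hc
    apply hβ
    apply Adj.reachable
    rw [deleteEdges_adj, hSkGdef, fromEdgeSet_adj]
    refine ⟨⟨Finset.mem_coe.mpr hc, hpqne⟩, ?_⟩
    simp only [Set.mem_singleton_iff]
    exact hef_ne
  have hcardV2 : 2 ≤ Fintype.card V := Fintype.one_lt_card_iff.mpr ⟨p, q, hpqne⟩
  -- spanning tree 1 : Sj - e + f
  have hreachJ : ∀ x : V, (SjG.deleteEdges {s(p,q)}).Reachable x p ∨
      (SjG.deleteEdges {s(p,q)}).Reachable x q :=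
    fun x => reach_del (hSjconn.preconnected x p)
  set G₁ := SimpleGraph.fromEdgeSet (↑(insert s(u,v) (Sj.erase s(p,q))) : Set (Sym2 V))
    with hG₁def
  have hle1 : SjG.deleteEdges {s(p,q)} ≤ G₁ := by
    intro x y hxy
    rw [deleteEdges_adj, hSjGdef, fromEdgeSet_adj] at hxy
    rw [hG₁def, fromEdgeSet_adj]
    refine ⟨?_, hxy.1.2⟩
    rw [Finset.mem_coe, Finset.mem_insert]
    right
    rw [Finset.mem_erase]
    exact ⟨by simpa using hxy.2, by exact_mod_cast hxy.1.1⟩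
  have hadjf1 : G₁.Adj u v := by
    rw [hG₁def, fromEdgeSet_adj]
    exact ⟨by rw [Finset.mem_coe]; exact Finset.mem_insert_self _ _, huvne⟩
  have hKey1 : G₁.Reachable p u ∧ G₁.Reachable q u := by
    rcases hreachJ u with hup | huq <;> rcases hreachJ v with hvp | hvq
    · exact absurd (hup.trans hvp.symm) hnuv
    · exact ⟨(hup.mono hle1).symm, ((hvq.mono hle1).symm).trans hadjf1.symm.reachable⟩
    · exact ⟨((hvp.mono hle1).symm).trans hadjf1.symm.reachable, (huq.mono hle1).symm⟩
    · exact absurd (huq.trans hvq.symm) hnuv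
  have hallu : ∀ x : V, G₁.Reachable x u := by
    intro x
    rcases hreachJ x with h | h
    · exact (h.mono hle1).trans hKey1.1
    · exact (h.mono hle1).trans hKey1.2
  have hG₁conn : G₁.Connected := ⟨fun x y => (hallu x).trans (hallu y).symm⟩
  have hfnotin : s(u,v) ∉ Sj.erase s(p,q) := fun hc => hfSj (Finset.mem_erase.mp hc).2
  have hcard1 : (insert s(u,v) (Sj.erase s(p,q))).card = Fintype.card V - 1 := by
    rw [Finset.card_insert_of_notMem hfnotin, Finset.card_erase_of_mem heSj, hSjcard]
    omega
  -- spanning tree 2 : Sk - f + e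
  have hreachK : ∀ x : V, (SkG.deleteEdges {s(u,v)}).Reachable x u ∨
      (SkG.deleteEdges {s(u,v)}).Reachable x v :=
    fun x => reach_del (hSkconn.preconnected x u)
  set G₂ := SimpleGraph.fromEdgeSet (↑(insert s(p,q) (Sk.erase s(u,v))) : Set (Sym2 V))
    with hG₂def
  have hle2 : SkG.deleteEdges {s(u,v)} ≤ G₂ := by
    intro x y hxy
    rw [deleteEdges_adj, hSkGdef, fromEdgeSet_adj] at hxy
    rw [hG₂def, fromEdgeSet_adj]
    refine ⟨?_, hxy.1.2⟩
    rw [Finset.mem_coe, Finset.mem_insert]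
    right
    rw [Finset.mem_erase]
    exact ⟨by simpa using hxy.2, by exact_mod_cast hxy.1.1⟩
  have hadje2 : G₂.Adj p q := by
    rw [hG₂def, fromEdgeSet_adj]
    exact ⟨by rw [Finset.mem_coe]; exact Finset.mem_insert_self _ _, hpqne⟩
  have hKey2 : G₂.Reachable u p ∧ G₂.Reachable v p := by
    rcases hreachK p with hpu | hpv <;> rcases hreachK q with hqu | hqv
    · exact absurd (hpu.trans hqu.symm) hβ
    · exact ⟨(hpu.mono hle2).symm, ((hqv.mono hle2).symm).trans hadje2.symm.reachable⟩
    · exact ⟨((hqu.mono hle2).symm).trans hadje2.symm.reachable, (hpv.mono hle2).symm⟩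
    · exact absurd (hpv.trans hqv.symm) hβ
  have hallp : ∀ x : V, G₂.Reachable x p := by
    intro x
    rcases hreachK x with h | h
    · exact (h.mono hle2).trans hKey2.1
    · exact (h.mono hle2).trans hKey2.2
  have hG₂conn : G₂.Connected := ⟨fun x y => (hallp x).trans (hallp y).symm⟩
  have henotin : s(p,q) ∉ Sk.erase s(u,v) := fun hc => heSk (Finset.mem_erase.mp hc).2
  have hcard2 : (insert s(p,q) (Sk.erase s(u,v))).card = Fintype.card V - 1 := by
    rw [Finset.card_insert_of_notMem henotin, Finset.card_erase_of_mem hfSk, hSkcard]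
    omega
  refine ⟨s(p,q), heSj, s(u,v), hfSk, ⟨?_, ?_, hcard1⟩, ⟨?_, ?_, hcard2⟩, ?_, hfW⟩
  · intro g hg
    rcases Finset.mem_insert.mp hg with rfl | hg
    · rw [Sym2.mk_isDiag_iff]; exact huvne
    · exact hSjnd g (Finset.mem_erase.mp hg).2
  · exact hG₁def ▸ hG₁conn
  · intro g hg
    rcases Finset.mem_insert.mp hg with rfl | hg
    · rw [Sym2.mk_isDiag_iff]; exact hpqne
    · exact hSknd g (Finset.mem_erase.mp hg).2
  · exact hG₂def ▸ hG₂conn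
  · intro hc
    rw [mem_within] at hc
    exact hnUpq ⟨hc.2.1, hc.2.2⟩


end STT

end
end

section
/- Let x* be a feasible solution of the s-t-path LP, ε ≥ 0, 0 ≤ β < 1/2, S ∈ 𝒮, and 0 ≤ γ_S ≤ 1. Then the vector y^S := β(1+ε) x* + (1−2β) χ^{J_S} + z^S lies in the T_S-join polyhedron; that is, y^S ≥ 0 and y^S(δ(U)) ≥ 1 for every U ⊊ V with |U ∩ T_S| odd. -/
open Finset SimpleGraph

attribute [local instance 10] Classical.propDecidable

noncomputable section

namespace STT

variable {V : Type*} [Fintype V] [DecidableEq V]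

lemma mk_mem_cutOf {W : Finset V} {a b : V} :
    s(a, b) ∈ cutOf W ↔ ((a ∈ W ∧ b ∉ W) ∨ (b ∈ W ∧ a ∉ W)) := by
  simp only [cutOf, Finset.mem_filter, Finset.mem_univ, true_and]
  constructor
  · rintro ⟨u, v, h, hu, hv⟩
    rcases Sym2.eq_iff.1 h with ⟨rfl, rfl⟩ | ⟨rfl, rfl⟩ <;> tauto
  · rintro (⟨ha, hb⟩ | ⟨hb, ha⟩)
    · exact ⟨a, b, rfl, ha, hb⟩
    · exact ⟨b, a, Sym2.eq_swap, hb, ha⟩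

lemma cut_ind (W : Finset V) (a b : V) :
    (if s(a, b) ∈ cutOf W then (1 : ZMod 2) else 0)
      = (if a ∈ W then 1 else 0) + (if b ∈ W then 1 else 0) := by
  by_cases ha : a ∈ W <;> by_cases hb : b ∈ W <;>
    simp [mk_mem_cutOf, ha, hb] <;> decide

lemma cast_two (n : ℕ) : (n : ZMod 2) = if Even n then 0 else 1 := by
  induction n with
  | zero => simp
  | succ k ih =>
      rw [Nat.cast_succ, ih]
      by_cases h : Even k <;> simp [Nat.even_add_one, h] <;> decide

lemma odd_of_cast {n : ℕ} (h : (n : ZMod 2) = 1) : Odd n := by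
  rw [cast_two] at h
  rcases Nat.even_or_odd n with he | ho
  · simp [he] at h
  · exact ho

lemma even_of_cast {n : ℕ} (h : (n : ZMod 2) = 0) : Even n := by
  rw [cast_two] at h
  by_cases he : Even n
  · exact he
  · simp [he] at h

lemma cast_of_odd {n : ℕ} (h : Odd n) : (n : ZMod 2) = 1 := by
  rw [cast_two, if_neg (Nat.not_even_iff_odd.2 h)]

lemma cast_of_even {n : ℕ} (h : Even n) : (n : ZMod 2) = 0 := by
  rw [cast_two, if_pos h]

lemma handshake (W : Finset V) (S : Finset (Sym2 V)) (hnd : ∀ e ∈ S, ¬e.IsDiag) :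
    ((S ∩ cutOf W).card : ZMod 2) = ∑ v ∈ W, (degIn S v : ZMod 2) := by
  have h1 : ((S ∩ cutOf W).card : ZMod 2)
      = ∑ e ∈ S, (if e ∈ cutOf W then (1 : ZMod 2) else 0) := by
    rw [Finset.sum_boole, ← Finset.filter_mem_eq_inter]
  have h2 : ∑ v ∈ W, (degIn S v : ZMod 2)
      = ∑ e ∈ S, ((W.filter (fun v => v ∈ e)).card : ZMod 2) := by
    simp only [degIn]
    have : ∀ v, ((S.filter fun e => v ∈ e).card : ZMod 2)
        = ∑ e ∈ S, (if v ∈ e then (1 : ZMod 2) else 0) := by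
      intro v; rw [Finset.sum_boole]
    rw [Finset.sum_congr rfl fun v _ => this v, Finset.sum_comm]
    refine Finset.sum_congr rfl fun e _ => ?_
    rw [Finset.sum_boole]
  rw [h1, h2]
  refine Finset.sum_congr rfl fun e he => ?_
  induction e using Sym2.ind with
  | _ a b =>
    have hab : a ≠ b := by
      intro h; exact hnd _ he (by simp [h])
    have : W.filter (fun v => v ∈ s(a, b)) = W ∩ {a, b} := by
      ext v; simp [Sym2.mem_iff]
    rw [this, cut_ind]
    by_cases ha : a ∈ W <;> by_cases hb : b ∈ W
    · have : W ∩ {a, b} = {a, b} := by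
        apply Finset.inter_eq_right.2; intro v hv
        simp at hv; rcases hv with rfl | rfl <;> assumption
      rw [this, Finset.card_pair hab]
      simp [ha, hb]
      decide
    · have : W ∩ {a, b} = {a} := by
        ext v; simp only [Finset.mem_inter, Finset.mem_insert, Finset.mem_singleton]
        constructor
        · rintro ⟨hv, rfl | rfl⟩; rfl; exact absurd hv hb
        · rintro rfl; exact ⟨ha, Or.inl rfl⟩
      rw [this, Finset.card_singleton]; simp [ha, hb]
    · have : W ∩ {a, b} = {b} := by
        ext v; simp only [Finset.mem_inter, Finset.mem_insert, Finset.mem_singleton]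
        constructor
        · rintro ⟨hv, rfl | rfl⟩; exact absurd hv ha; rfl
        · rintro rfl; exact ⟨hb, Or.inr rfl⟩
      rw [this, Finset.card_singleton]; simp [ha, hb]
    · have : W ∩ {a, b} = ∅ := by
        ext v; simp only [Finset.mem_inter, Finset.mem_insert, Finset.mem_singleton,
          Finset.notMem_empty, iff_false, not_and]
        rintro hv (rfl | rfl); exact ha hv; exact hb hv
      rw [this, Finset.card_empty]; simp [ha, hb]

lemma degIn_cast (s t : V) (S : Finset (Sym2 V)) (v : V) :
    (degIn S v : ZMod 2) = (if v ∈ wrongParity s t S then 1 else 0)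
      + (if v = s ∨ v = t then 1 else 0) := by
  have hv : v ∈ wrongParity s t S ↔
      (if v = s ∨ v = t then Even (degIn S v) else ¬Even (degIn S v)) := by
    simp [wrongParity]
  by_cases hst : v = s ∨ v = t <;> by_cases he : Even (degIn S v) <;>
    simp [cast_two, hv, hst, he] <;> decide

lemma sum_deg (s t : V) (S : Finset (Sym2 V)) (W : Finset V) :
    ∑ v ∈ W, (degIn S v : ZMod 2)
      = ((W ∩ wrongParity s t S).card : ZMod 2)
        + ((W ∩ ({s, t} : Finset V)).card : ZMod 2) := by
  have h1 : ((W ∩ wrongParity s t S).card : ZMod 2)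
      = ∑ v ∈ W, (if v ∈ wrongParity s t S then (1 : ZMod 2) else 0) := by
    rw [Finset.sum_boole, ← Finset.filter_mem_eq_inter]
  have h2 : ((W ∩ ({s, t} : Finset V)).card : ZMod 2)
      = ∑ v ∈ W, (if v = s ∨ v = t then (1 : ZMod 2) else 0) := by
    rw [Finset.sum_boole]
    congr 1
    rw [← Finset.filter_mem_eq_inter]
    congr 1
    ext v
    simp
  rw [h1, h2, ← Finset.sum_add_distrib]
  exact Finset.sum_congr rfl fun v _ => degIn_cast s t S v

lemma st_card {s t : V} (hst : s ≠ t) (W : Finset V) :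
    ((W ∩ ({s, t} : Finset V)).card : ZMod 2)
      = (if s ∈ W then 1 else 0) + (if t ∈ W then 1 else 0) := by
  rw [Finset.inter_comm, ← Finset.filter_mem_eq_inter]
  by_cases hs : s ∈ W <;> by_cases ht : t ∈ W <;>
    simp [Finset.filter_insert, Finset.filter_singleton, hs, ht,
      Finset.card_pair hst] <;> decide

lemma walk_parity {G : SimpleGraph V} {a b : V} (w : G.Walk a b) (W : Finset V) :
    ((w.edges.filter (fun e => e ∈ cutOf W)).length : ZMod 2)
      = (if a ∈ W then 1 else 0) + (if b ∈ W then 1 else 0) := by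
  induction w with
  | nil =>
      simp only [SimpleGraph.Walk.edges_nil, List.filter_nil, List.length_nil, Nat.cast_zero]
      split_ifs <;> decide
  | @cons u v x h p ih =>
      have hfc : (((SimpleGraph.Walk.cons h p).edges.filter
            (fun e => e ∈ cutOf W)).length : ZMod 2)
          = (if s(u, v) ∈ cutOf W then (1 : ZMod 2) else 0)
            + ((p.edges.filter (fun e => e ∈ cutOf W)).length : ZMod 2) := by
        rw [SimpleGraph.Walk.edges_cons, List.filter_cons]
        by_cases hm : s(u, v) ∈ cutOf W <;> simp [hm, add_comm]
      rw [hfc, ih, cut_ind]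
      by_cases h1 : u ∈ W <;> by_cases h2 : v ∈ W <;> by_cases h3 : x ∈ W <;>
        simp [h1, h2, h3] <;> decide


lemma xval_add (f g : Sym2 V → ℝ) (C : Finset (Sym2 V)) :
    xval (fun e => f e + g e) C = xval f C + xval g C := Finset.sum_add_distrib

lemma xval_smul (a : ℝ) (f : Sym2 V → ℝ) (C : Finset (Sym2 V)) :
    xval (fun e => a * f e) C = a * xval f C := (Finset.mul_sum _ _ _).symm

lemma xval_sum {ι : Type*} (F : Finset ι) (f : ι → Sym2 V → ℝ) (C : Finset (Sym2 V)) :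
    xval (fun e => ∑ i ∈ F, f i e) C = ∑ i ∈ F, xval (f i) C := Finset.sum_comm

lemma xval_chi (F C : Finset (Sym2 V)) : xval (chi F) C = ((F ∩ C).card : ℝ) := by
  unfold xval chi
  rw [Finset.sum_boole, Finset.filter_mem_eq_inter, Finset.inter_comm]

lemma xval_single (e : Sym2 V) (C : Finset (Sym2 V)) :
    xval (chi {e}) C = if e ∈ C then 1 else 0 := by
  rw [xval_chi]
  by_cases h : e ∈ C <;> simp [Finset.singleton_inter_of_mem,
    Finset.singleton_inter_of_notMem, h]

lemma xval_yvec (xstar : Sym2 V → ℝ) (β ε γS : ℝ) (eC : Finset (Sym2 V) → Sym2 V)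
    (S IS : Finset (Sym2 V)) (C : Finset (Sym2 V)) :
    xval (yvec xstar β ε γS eC S IS) C
      = β * (1 + ε) * xval xstar C
        + (1 - 2 * β) * (((S \ IS) ∩ C).card : ℝ)
        + (1 - 2 * β) * γS * ((IS ∩ C).card : ℝ)
        + ∑ C' ∈ (NarrowCuts xstar).filter (fun C' => Even (S ∩ C').card),
            max 0 (β * (2 - xval xstar C' - ε) - (1 - 2 * β) * γS)
              * (if eC C' ∈ C then 1 else 0) := by
  show xval (fun g => (β * (1 + ε) * xstar g + (1 - 2 * β) * chi (S \ IS) g)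
      + ((1 - 2 * β) * γS * chi IS g
        + ∑ C' ∈ (NarrowCuts xstar).filter (fun C' => Even (S ∩ C').card),
            max 0 (β * (2 - xval xstar C' - ε) - (1 - 2 * β) * γS) * chi {eC C'} g)) C = _
  rw [xval_add, xval_add, xval_add, xval_smul, xval_smul, xval_smul, xval_sum,
    xval_chi, xval_chi]
  have : ∀ C' ∈ (NarrowCuts xstar).filter (fun C' => Even (S ∩ C').card),
      xval (fun g => max 0 (β * (2 - xval xstar C' - ε) - (1 - 2 * β) * γS)
          * chi {eC C'} g) C
        = max 0 (β * (2 - xval xstar C' - ε) - (1 - 2 * β) * γS)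
          * (if eC C' ∈ C then 1 else 0) := by
    intro C' _
    rw [xval_smul, xval_single]
  rw [Finset.sum_congr rfl this]
  ring

theorem stmt13 {V : Type*} [Fintype V] [DecidableEq V]
    (hV : 2 ≤ Fintype.card V) (s t : V) (hst : s ≠ t)
    (c : V → V → ℝ) (hcsymm : ∀ u v : V, c u v = c v u)
    (hcnonneg : ∀ u v : V, 0 ≤ c u v) (hcdiag : ∀ v : V, c v v = 0)
    (hctri : ∀ u v w : V, c u w ≤ c u v + c v w)
    (xstar : Sym2 V → ℝ) (hfeas : LPFeasible s t xstar)
    (ε : ℝ) (hε : 0 ≤ ε) (β : ℝ) (hβ0 : 0 ≤ β) (hβ : β < 1 / 2)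
    (S : Finset (Sym2 V)) (hS : IsSpanningTree S)
    (γS : ℝ) (hγ0 : 0 ≤ γS) (hγ1 : γS ≤ 1)
    (IS : Finset (Sym2 V)) (hIS : IsPathEdges s t S IS)
    (eC : Finset (Sym2 V) → Sym2 V)
    (heC : ∀ C : Finset (Sym2 V), IsNarrowCut xstar C →
      eC C ∈ C ∧ ∀ f ∈ C, cost c (chi {eC C}) ≤ cost c (chi {f})) :
    (∀ g : Sym2 V, 0 ≤ yvec xstar β ε γS eC S IS g) ∧
    ∀ W : Finset V, W ≠ Finset.univ → Odd ((W ∩ wrongParity s t S).card) →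
      1 ≤ xval (yvec xstar β ε γS eC S IS) (cutOf W) := by
  obtain ⟨hx0, hxdiag, hcutE, hcutO, -, -, -⟩ := hfeas
  obtain ⟨hSnd, hScon, -⟩ := hS
  have hβ' : (0:ℝ) ≤ 1 - 2*β := by linarith
  obtain ⟨w, hwp, hISdef⟩ := hIS
  have hsub : IS ⊆ S := by
    rw [hISdef]; intro e he
    rw [List.mem_toFinset] at he
    have h2 := w.edges_subset_edgeSet he
    rw [SimpleGraph.edgeSet_fromEdgeSet] at h2
    exact h2.1
  have hxg : ∀ g, 0 ≤ xstar g := fun g => by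
    by_cases h : g.IsDiag
    · rw [hxdiag g h]
    · exact hx0 g h
  have hchinn : ∀ (F : Finset (Sym2 V)) g, 0 ≤ chi F g := fun F g => by
    unfold chi; split_ifs <;> norm_num
  have hmaxnn : ∀ C : Finset (Sym2 V),
      0 ≤ max 0 (β * (2 - xval xstar C - ε) - (1 - 2*β)*γS) := fun C => le_max_left _ _
  constructor
  · intro g
    have h1 : 0 ≤ β*(1+ε)*xstar g :=
      mul_nonneg (mul_nonneg hβ0 (by linarith)) (hxg g)
    have h2 : 0 ≤ (1-2*β) * chi (S \ IS) g := mul_nonneg hβ' (hchinn _ _)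
    have h3 : 0 ≤ (1-2*β)*γS * chi IS g := mul_nonneg (mul_nonneg hβ' hγ0) (hchinn _ _)
    have h4 : 0 ≤ ∑ C ∈ (NarrowCuts xstar).filter (fun C => Even (S ∩ C).card),
        max 0 (β * (2 - xval xstar C - ε) - (1 - 2*β)*γS) * chi {eC C} g :=
      Finset.sum_nonneg fun C _ => mul_nonneg (hmaxnn C) (hchinn _ _)
    exact add_nonneg (add_nonneg h1 h2) (add_nonneg h3 h4)
  · intro W hWuniv hodd
    have hWne : W.Nonempty := by
      rcases hodd with ⟨k, hk⟩
      have h1 : (W ∩ wrongParity s t S).Nonempty := Finset.card_pos.1 (by omega)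
      obtain ⟨v, hv⟩ := h1; exact ⟨v, (Finset.mem_inter.1 hv).1⟩
    have hpar : ((S ∩ cutOf W).card : ZMod 2)
        = ((W ∩ wrongParity s t S).card : ZMod 2)
          + ((W ∩ ({s,t}:Finset V)).card : ZMod 2) := by
      rw [handshake W S hSnd, sum_deg]
    have hparT : ((W ∩ wrongParity s t S).card : ZMod 2) = 1 := cast_of_odd hodd
    have hparI : ((IS ∩ cutOf W).card : ZMod 2)
        = ((W ∩ ({s,t}:Finset V)).card : ZMod 2) := by
      have h5 : w.edges.toFinset ∩ cutOf W
          = (w.edges.filter (fun e => e ∈ cutOf W)).toFinset := by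
        rw [List.toFinset_filter]; ext e; simp
      rw [hISdef, h5, List.toFinset_card_of_nodup (hwp.edges_nodup.filter _),
        walk_parity, st_card hst]
    have hsplit : (S ∩ cutOf W).card
        = ((S \ IS) ∩ cutOf W).card + (IS ∩ cutOf W).card := by
      rw [← Finset.card_union_of_disjoint
        (Finset.sdiff_disjoint.mono Finset.inter_subset_left Finset.inter_subset_left),
        ← Finset.union_inter_distrib_right, Finset.sdiff_union_of_subset hsub]
    rw [xval_yvec]
    set xv := xval xstar (cutOf W) with hxvdef
    set j := ((S \ IS) ∩ cutOf W).card with hjdef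
    set i := ((IS) ∩ cutOf W).card with hidef
    have hsum_nn : 0 ≤ ∑ C' ∈ (NarrowCuts xstar).filter (fun C' => Even (S ∩ C').card),
        max 0 (β * (2 - xval xstar C' - ε) - (1 - 2 * β) * γS)
          * (if eC C' ∈ cutOf W then (1:ℝ) else 0) :=
      Finset.sum_nonneg fun C' _ => mul_nonneg (hmaxnn C') (by positivity)
    have hcast := congrArg (Nat.cast : ℕ → ZMod 2) hsplit
    push_cast at hcast
    by_cases hWst : Even ((W ∩ ({s,t}:Finset V)).card)
    · have hxv : 2 ≤ xv := hcutE W hWne hWuniv hWst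
      have hjc : ((j:ℕ) : ZMod 2) = 1 := by
        rw [hparI, cast_of_even hWst] at hcast
        rw [hpar, hparT, cast_of_even hWst] at hcast
        simpa using hcast.symm
      have hj : 1 ≤ j := Nat.one_le_iff_ne_zero.2 (fun h0 => by rw [h0] at hjc; exact absurd hjc (by decide))
      have hjR : (1:ℝ) ≤ (j:ℝ) := by exact_mod_cast hj
      have hiR : (0:ℝ) ≤ (i:ℝ) := by positivity
      have h2b : 2*β ≤ β*(1+ε)*xv := by
        have hx2 : (2:ℝ) ≤ (1+ε)*xv := by
          calc (2:ℝ) ≤ xv := hxv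
          _ = 1*xv := by ring
          _ ≤ (1+ε)*xv := mul_le_mul_of_nonneg_right (by linarith) (by linarith)
        have h7 := mul_le_mul_of_nonneg_left hx2 hβ0
        nlinarith [h7]
      have hjb : 1 - 2*β ≤ (1-2*β) * (j:ℝ) := by
        have h7 := mul_le_mul_of_nonneg_left hjR hβ'
        linarith
      have hib : 0 ≤ (1-2*β)*γS * (i:ℝ) := mul_nonneg (mul_nonneg hβ' hγ0) hiR
      linarith
    · have hxv1 : 1 ≤ xv := hcutO W hWne hWuniv hWst
      have hstc : ((W ∩ ({s,t}:Finset V)).card : ZMod 2) = 1 :=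
        cast_of_odd (Nat.not_even_iff_odd.1 hWst)
      have hkc : ((S ∩ cutOf W).card : ZMod 2) = 0 := by
        rw [hpar, hparT, hstc]; decide
      have hic : ((i:ℕ) : ZMod 2) = 1 := by rw [hidef, hparI, hstc]
      have hjc : ((j:ℕ) : ZMod 2) = 1 := by
        rw [hkc, hic] at hcast
        have h2 := eq_neg_of_add_eq_zero_left hcast.symm
        rw [h2]; decide
      have hi : 1 ≤ i := Nat.one_le_iff_ne_zero.2 (fun h0 => by rw [h0] at hic; exact absurd hic (by decide))
      have hj : 1 ≤ j := Nat.one_le_iff_ne_zero.2 (fun h0 => by rw [h0] at hjc; exact absurd hjc (by decide))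
      have hjR : (1:ℝ) ≤ (j:ℝ) := by exact_mod_cast hj
      have hiR : (1:ℝ) ≤ (i:ℝ) := by exact_mod_cast hi
      have hjb : 1 - 2*β ≤ (1-2*β) * (j:ℝ) := by
        have h7 := mul_le_mul_of_nonneg_left hjR hβ'
        linarith
      have hib : (1-2*β)*γS ≤ (1-2*β)*γS * (i:ℝ) := by
        have h7 := mul_le_mul_of_nonneg_left hiR (mul_nonneg hβ' hγ0)
        linarith
      by_cases hnar : xv < 2
      · have hCnar : IsNarrowCut xstar (cutOf W) := ⟨W, hWne, hWuniv, rfl, hnar⟩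
        have hCmem : cutOf W ∈ (NarrowCuts xstar).filter (fun C' => Even (S ∩ C').card) := by
          rw [Finset.mem_filter]
          exact ⟨by simp [NarrowCuts, hCnar], even_of_cast hkc⟩
        have heCC : eC (cutOf W) ∈ cutOf W := (heC (cutOf W) hCnar).1
        have hsum : max 0 (β * (2 - xv - ε) - (1 - 2 * β) * γS)
            ≤ ∑ C' ∈ (NarrowCuts xstar).filter (fun C' => Even (S ∩ C').card),
              max 0 (β * (2 - xval xstar C' - ε) - (1 - 2 * β) * γS)
                * (if eC C' ∈ cutOf W then (1:ℝ) else 0) := by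
          have h6 := Finset.single_le_sum
            (f := fun C' => max 0 (β * (2 - xval xstar C' - ε) - (1 - 2 * β) * γS)
              * (if eC C' ∈ cutOf W then (1:ℝ) else 0))
            (fun C' _ => mul_nonneg (hmaxnn C') (by positivity)) hCmem
          simpa [heCC, hxvdef] using h6
        have hM : β * (2 - xv - ε) - (1 - 2 * β) * γS
            ≤ max 0 (β * (2 - xv - ε) - (1 - 2 * β) * γS) := le_max_right _ _
        have hkey : 2*β ≤ β*(1+ε)*xv + β*(2-xv-ε) := by
          have h7 : 0 ≤ β*ε*(xv-1) :=
            mul_nonneg (mul_nonneg hβ0 hε) (by linarith)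
          have h8 : β*(1+ε)*xv + β*(2-xv-ε) - 2*β = β*ε*(xv-1) := by ring
          linarith
        linarith
      · have hxv : 2 ≤ xv := by linarith
        have h2b : 2*β ≤ β*(1+ε)*xv := by
          have hx2 : (2:ℝ) ≤ (1+ε)*xv := by
            calc (2:ℝ) ≤ xv := hxv
            _ = 1*xv := by ring
            _ ≤ (1+ε)*xv := mul_le_mul_of_nonneg_right (by linarith) (by linarith)
          have h7 := mul_le_mul_of_nonneg_left hx2 hβ0
          nlinarith [h7]
        have hib : 0 ≤ (1-2*β)*γS * (i:ℝ) :=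
          mul_nonneg (mul_nonneg hβ' hγ0) (Nat.cast_nonneg _)
        linarith


end STT

end
end

section
/- Let x* be a feasible solution of the s-t-path LP and let p be a probability distribution on 𝒮 with x* = Σ_{S∈𝒮} p_S χ^S. Then for every narrow cut C ∈ 𝒞: Σ_{S∈𝒮 : |S∩C| = 1} p_S ≥ 2 − x*(C). -/
open Finset SimpleGraph

attribute [local instance 10] Classical.propDecidable

noncomputable section

namespace STT

variable {V : Type*} [Fintype V] [DecidableEq V]

lemma tree_meets_cut {V : Type*} [Fintype V] [DecidableEq V]
    {S : Finset (Sym2 V)} (hconn : (SimpleGraph.fromEdgeSet (↑S : Set (Sym2 V))).Connected)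
    {U : Finset V} (hU : U.Nonempty) (hU' : U ≠ Finset.univ) :
    (S ∩ cutOf U).Nonempty := by
  obtain ⟨u, hu⟩ := hU
  obtain ⟨v, hv⟩ : ∃ v, v ∉ U := by
    by_contra h; push_neg at h; exact hU' (Finset.eq_univ_iff_forall.2 h)
  obtain ⟨w⟩ := hconn.preconnected u v
  obtain ⟨d, _, hd1, hd2⟩ := w.exists_boundary_dart (↑U : Set V) hu hv
  have hadj := d.adj
  rw [SimpleGraph.fromEdgeSet_adj] at hadj
  refine ⟨s(d.fst, d.snd), Finset.mem_inter.2 ⟨hadj.1, ?_⟩⟩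
  unfold cutOf
  simp only [Finset.mem_filter, Finset.mem_univ, true_and]
  exact ⟨d.fst, d.snd, rfl, hd1, hd2⟩

theorem stmt14 {V : Type*} [Fintype V] [DecidableEq V]
    (hV : 2 ≤ Fintype.card V) (s t : V) (hst : s ≠ t)
    (xstar : Sym2 V → ℝ) (hfeas : LPFeasible s t xstar)
    (p : Finset (Sym2 V) → ℝ) (hp0 : ∀ S : Finset (Sym2 V), 0 ≤ p S)
    (hp1 : ∑ S : Finset (Sym2 V), p S = 1)
    (hpsupp : ∀ S : Finset (Sym2 V), p S ≠ 0 → IsSpanningTree S)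
    (hxs : ∀ e : Sym2 V, xstar e = ∑ S : Finset (Sym2 V), p S * chi S e) :
    ∀ C : Finset (Sym2 V), IsNarrowCut xstar C →
      2 - xval xstar C ≤
        ∑ S ∈ Finset.univ.filter (fun S : Finset (Sym2 V) => (S ∩ C).card = 1), p S := by
  intro C hC
  obtain ⟨U, hUne, hUuniv, hCU, -⟩ := hC
  have hx : xval xstar C = ∑ S : Finset (Sym2 V), p S * ((S ∩ C).card : ℝ) := by
    unfold xval
    simp only [hxs]
    rw [Finset.sum_comm]
    refine Finset.sum_congr rfl fun S _ => ?_
    rw [← Finset.mul_sum]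
    congr 1
    unfold chi
    rw [Finset.sum_boole, Finset.filter_mem_eq_inter, Finset.inter_comm]
  have key : ∀ S : Finset (Sym2 V),
      2 * p S - (if (S ∩ C).card = 1 then p S else 0) ≤ p S * ((S ∩ C).card : ℝ) := by
    intro S
    by_cases hp : p S = 0
    · simp [hp]
    · have hT := hpsupp S hp
      have hmeet := tree_meets_cut hT.2.1 hUne hUuniv
      rw [← hCU] at hmeet
      have hcard1 : 1 ≤ (S ∩ C).card := Finset.card_pos.mpr hmeet
      by_cases h1 : (S ∩ C).card = 1
      · simp [h1]; linarith
      · have h2 : 2 ≤ (S ∩ C).card := by omega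
        have h2' : (2 : ℝ) ≤ ((S ∩ C).card : ℝ) := by exact_mod_cast h2
        have hps : 0 ≤ p S := hp0 S
        simp only [h1, if_false, sub_zero]
        nlinarith
  have hsum := Finset.sum_le_sum (fun S (_ : S ∈ Finset.univ) => key S)
  rw [← hx] at hsum
  have hsplit : ∑ S : Finset (Sym2 V),
      (2 * p S - (if (S ∩ C).card = 1 then p S else 0)) =
      2 - ∑ S ∈ Finset.univ.filter (fun S : Finset (Sym2 V) => (S ∩ C).card = 1), p S := by
    rw [Finset.sum_sub_distrib, ← Finset.mul_sum, hp1, Finset.sum_filter]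
    ring
  rw [hsplit] at hsum
  linarith

end STT

end
end

section
/- Let S_j and S_k be edge sets of spanning trees of the complete graph on V, and let M ⊆ V be such that (V, S_k)[M] is connected and (V, S_j)[M] is disconnected; let A_1, ..., A_q (q ≥ 2) be the vertex sets of the connected components of (V, S_j)[M]. Let F := S_k ∩ ⋃_{p=1}^q (δ(A_p) \ δ(M)), and for p = 1, ..., q let B_p be the set of vertices reachable from A_p in the graph (V, S_k \ F). Let Y be the union of the edge sets of the unique u-w-paths in S_j over all u, w ∈ M. Then there exist an index p ∈ {1, ..., q} and an edge e ∈ Y ∩ δ(B_p) such that for every p' ∈ {1, ..., q} \ {p}, the path in S_j from A_p to A_{p'} contains e. -/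
open Finset SimpleGraph

attribute [local instance 10] Classical.propDecidable

noncomputable section

namespace STT

variable {V : Type*} [Fintype V] [DecidableEq V]

section Aux
variable {V : Type*} [Fintype V] [DecidableEq V]

lemma reach_erase_of_walk {S : Finset (Sym2 V)} {f : Sym2 V} {a b : V}
    (P : (fromEdgeSet (↑S : Set (Sym2 V))).Walk a b) (h : f ∉ P.edges) :
    (fromEdgeSet (↑(S.erase f) : Set (Sym2 V))).Reachable a b := by
  induction P with
  | nil => exact Reachable.refl _
  | cons h' q ih =>
    rename_i u v w
    rw [Walk.edges_cons, List.mem_cons, not_or] at h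
    have hadj : (fromEdgeSet (↑(S.erase f) : Set (Sym2 V))).Adj u v := by
      rw [fromEdgeSet_adj] at h' ⊢
      exact ⟨Finset.mem_coe.mpr (Finset.mem_erase.mpr
        ⟨fun hc => h.1 hc.symm, Finset.mem_coe.mp h'.1⟩), h'.2⟩
    exact (hadj.reachable).trans (ih h.2)

lemma split_reach {S : Finset (Sym2 V)} {a b x y : V}
    (P : (fromEdgeSet (↑S : Set (Sym2 V))).Walk a b) (hnd : P.edges.Nodup)
    (hf : s(x,y) ∈ P.edges) :
    ((fromEdgeSet (↑(S.erase s(x,y)) : Set (Sym2 V))).Reachable a x ∧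
      (fromEdgeSet (↑(S.erase s(x,y)) : Set (Sym2 V))).Reachable y b) ∨
    ((fromEdgeSet (↑(S.erase s(x,y)) : Set (Sym2 V))).Reachable a y ∧
      (fromEdgeSet (↑(S.erase s(x,y)) : Set (Sym2 V))).Reachable x b) := by
  induction P with
  | nil => simp at hf
  | cons h' q ih =>
    rename_i u v w
    rw [Walk.edges_cons, List.nodup_cons] at hnd
    rw [Walk.edges_cons, List.mem_cons] at hf
    rcases hf with hf | hf
    · have hq : s(x,y) ∉ q.edges := hf ▸ hnd.1
      have hr := reach_erase_of_walk q hq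
      rcases Sym2.eq_iff.mp hf with ⟨h1, h2⟩ | ⟨h1, h2⟩
      · subst h1; subst h2; exact Or.inl ⟨Reachable.refl _, hr⟩
      · subst h1; subst h2; exact Or.inr ⟨Reachable.refl _, hr⟩
    · have hne : s(u,v) ≠ s(x,y) := fun hc => hnd.1 (hc ▸ hf)
      have hadj : (fromEdgeSet (↑(S.erase s(x,y)) : Set (Sym2 V))).Adj u v := by
        rw [fromEdgeSet_adj] at h' ⊢
        exact ⟨Finset.mem_coe.mpr (Finset.mem_erase.mpr ⟨hne, Finset.mem_coe.mp h'.1⟩), h'.2⟩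
      rcases ih hnd.2 hf with ⟨r1, r2⟩ | ⟨r1, r2⟩
      · exact Or.inl ⟨hadj.reachable.trans r1, r2⟩
      · exact Or.inr ⟨hadj.reachable.trans r1, r2⟩

lemma exists_cross {H : SimpleGraph V} {a b : V} (P : H.Walk a b) (S : Finset V)
    (ha : a ∈ S) (hb : b ∉ S) :
    ∃ w₁ w₂, s(w₁,w₂) ∈ P.edges ∧ w₁ ∈ S ∧ w₂ ∉ S := by
  induction P with
  | nil => exact absurd ha hb
  | cons h' q ih =>
    rename_i u v w
    by_cases hv : v ∈ S
    · obtain ⟨w₁, w₂, hm, h1, h2⟩ := ih hv hb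
      exact ⟨w₁, w₂, by rw [Walk.edges_cons]; exact List.mem_cons_of_mem _ hm, h1, h2⟩
    · exact ⟨u, v, by rw [Walk.edges_cons]; exact List.mem_cons_self, ha, hv⟩

lemma card_le_of_connected {S : Finset (Sym2 V)}
    (hc : (fromEdgeSet (↑S : Set (Sym2 V))).Connected) : Fintype.card V ≤ S.card + 1 := by
  set G := fromEdgeSet (↑S : Set (Sym2 V)) with hG
  haveI hnV : Nonempty V := hc.nonempty
  obtain r := Classical.arbitrary V
  have hstep : ∀ v : V, ¬ v = r → ∃ u : V, G.Adj v u ∧ G.dist u r < G.dist v r := by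
    intro v hv
    obtain ⟨p, hp⟩ := (hc.preconnected v r).exists_walk_length_eq_dist
    cases p with
    | nil => exact absurd rfl hv
    | cons h' q =>
      rename_i u
      refine ⟨u, h', ?_⟩
      have h1 : G.dist u r ≤ q.length := SimpleGraph.dist_le q
      have h2 : q.length + 1 = G.dist v r := by simpa [Walk.length_cons] using hp
      omega
  let f : V → Sym2 V := fun v => if h : v = r then s(r,r) else s(v, Classical.choose (hstep v h))
  have hf : ∀ v (h : ¬ v = r), f v = s(v, Classical.choose (hstep v h)) := by
    intro v h; simp only [f, dif_neg h]
  have hchoose : ∀ v (h : ¬ v = r), G.Adj v (Classical.choose (hstep v h)) ∧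
      G.dist (Classical.choose (hstep v h)) r < G.dist v r := fun v h => Classical.choose_spec (hstep v h)
  have hinj : Set.InjOn f ↑(Finset.univ.erase r) := by
    intro v hv v' hv' heq
    have hv1 : ¬ v = r := by simpa using (Finset.mem_coe.mp hv)
    have hv2 : ¬ v' = r := by simpa using (Finset.mem_coe.mp hv')
    rw [hf v hv1, hf v' hv2] at heq
    rcases Sym2.eq_iff.mp heq with ⟨h1, _⟩ | ⟨h1, h2⟩
    · exact h1
    · exfalso
      have d1 := (hchoose v hv1).2
      have d2 := (hchoose v' hv2).2
      rw [h2] at d1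
      rw [← h1] at d2
      omega
  have hmaps : ∀ v ∈ Finset.univ.erase r, f v ∈ S := by
    intro v hv
    have hv1 : ¬ v = r := Finset.ne_of_mem_erase hv
    have h2 := (hchoose v hv1).1
    rw [fromEdgeSet_adj] at h2
    rw [hf v hv1]
    exact Finset.mem_coe.mp h2.1
  have hle := Finset.card_le_card_of_injOn f hmaps hinj
  rw [Finset.card_erase_of_mem (Finset.mem_univ r), Finset.card_univ] at hle
  have hcard : (0 : ℕ) < Fintype.card V := Fintype.card_pos
  omega

lemma bridge_of_card {S : Finset (Sym2 V)}
    (hc : (fromEdgeSet (↑S : Set (Sym2 V))).Connected) (hcard : S.card = Fintype.card V - 1)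
    {x y : V} (hxy : s(x,y) ∈ S) (hne : x ≠ y) :
    ¬ (fromEdgeSet (↑(S.erase s(x,y)) : Set (Sym2 V))).Reachable x y := by
  intro hre
  have hpatch : ∀ a b : V, (fromEdgeSet (↑S : Set (Sym2 V))).Reachable a b →
      (fromEdgeSet (↑(S.erase s(x,y)) : Set (Sym2 V))).Reachable a b := by
    intro a b hab
    obtain ⟨P⟩ := hab
    induction P with
    | nil => exact Reachable.refl _
    | cons h' q ih =>
      rename_i u v w
      refine Reachable.trans ?_ ih
      by_cases hvv : s(u,v) = s(x,y)
      · rcases Sym2.eq_iff.mp hvv with ⟨h1, h2⟩ | ⟨h1, h2⟩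
        · subst h1; subst h2; exact hre
        · subst h1; subst h2; exact hre.symm
      · refine Adj.reachable ?_
        rw [fromEdgeSet_adj] at h' ⊢
        exact ⟨Finset.mem_coe.mpr (Finset.mem_erase.mpr ⟨hvv, Finset.mem_coe.mp h'.1⟩), h'.2⟩
  haveI : Nonempty V := hc.nonempty
  have hc' : (fromEdgeSet (↑(S.erase s(x,y)) : Set (Sym2 V))).Connected :=
    SimpleGraph.Connected.mk (fun a b => hpatch a b (hc.preconnected a b))
  have hle := card_le_of_connected hc'
  rw [Finset.card_erase_of_mem hxy, hcard] at hle
  have h2 : 2 ≤ Fintype.card V := Fintype.one_lt_card_iff_nontrivial.mpr ⟨⟨x, y, hne⟩⟩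
  omega

lemma cross_orient {S : Finset (Sym2 V)} {a b : V}
    (P : (fromEdgeSet (↑S : Set (Sym2 V))).Walk a b) (hP : P.IsPath) (T : Finset V)
    (ha : a ∈ T) (hb : b ∉ T) :
    ∃ n₁ n₂ : V, s(n₁,n₂) ∈ P.edges ∧ (n₁ ∈ T ↔ n₂ ∉ T) ∧ (n₁ ∉ T ∨ n₂ ∉ T) ∧
      (fromEdgeSet (↑(S.erase s(n₁,n₂)) : Set (Sym2 V))).Reachable a n₁ ∧
      (fromEdgeSet (↑(S.erase s(n₁,n₂)) : Set (Sym2 V))).Reachable n₂ b := by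
  obtain ⟨w₁, w₂, hm, h1, h2⟩ := exists_cross P T ha hb
  rcases split_reach P hP.edges_nodup hm with ⟨r1, r2⟩ | ⟨r1, r2⟩
  · exact ⟨w₁, w₂, hm, iff_of_true h1 h2, Or.inr h2, r1, r2⟩
  · have hsw : s(w₂,w₁) = s(w₁,w₂) := Sym2.eq_swap
    refine ⟨w₂, w₁, ?_, iff_of_false h2 (not_not_intro h1), Or.inl h2, ?_, ?_⟩ <;> rw [hsw]
    exacts [hm, r1, r2]

/-- the candidate predicate: `s(n₁,n₂)` is an edge of `Y` crossing `δ(B p)` with the `A p`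
side at `n₁`. -/
def Cnd (Sj Y : Finset (Sym2 V)) {q : ℕ} (A B : Fin q → Finset V) (p : Fin q) (n₁ n₂ : V) : Prop :=
  s(n₁, n₂) ∈ Y ∧ (n₁ ∈ B p ↔ n₂ ∉ B p) ∧
    ∀ a ∈ A p, (fromEdgeSet (↑(Sj.erase s(n₁, n₂)) : Set (Sym2 V))).Reachable a n₁

theorem Cnd_def (Sj Y : Finset (Sym2 V)) {q : ℕ} (A B : Fin q → Finset V) (p : Fin q)
    (n₁ n₂ : V) : Cnd Sj Y A B p n₁ n₂ ↔
    (s(n₁, n₂) ∈ Y ∧ (n₁ ∈ B p ↔ n₂ ∉ B p) ∧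
      ∀ a ∈ A p, (fromEdgeSet (↑(Sj.erase s(n₁, n₂)) : Set (Sym2 V))).Reachable a n₁) := Iff.rfl

/-- the measure used for the extremal choice. -/
def meas (Sj : Finset (Sym2 V)) {q : ℕ} (B : Fin q → Finset V) (p : Fin q) (n₁ n₂ : V) : ℕ :=
  2 * (Finset.univ.filter fun z =>
      (fromEdgeSet (↑(Sj.erase s(n₁, n₂)) : Set (Sym2 V))).Reachable z n₁).card +
    (if n₁ ∈ B p then 0 else 1)

theorem meas_def (Sj : Finset (Sym2 V)) {q : ℕ} (B : Fin q → Finset V) (p : Fin q)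
    (n₁ n₂ : V) : meas Sj B p n₁ n₂ =
    2 * (Finset.univ.filter fun z =>
      (fromEdgeSet (↑(Sj.erase s(n₁, n₂)) : Set (Sym2 V))).Reachable z n₁).card +
    (if n₁ ∈ B p then 0 else 1) := rfl

end Aux

theorem stmt18 {V : Type*} [Fintype V] [DecidableEq V]
    (Sj Sk : Finset (Sym2 V)) (hSj : IsSpanningTree Sj) (hSk : IsSpanningTree Sk)
    (M : Finset V) (hconn : InducedConn Sk M) (hdisc : ¬InducedConn Sj M)
    (q : ℕ) (hq : 2 ≤ q) (A : Fin q → Finset V)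
    (hAne : ∀ p : Fin q, (A p).Nonempty) (hAsub : ∀ p : Fin q, A p ⊆ M)
    (hApart : ∀ v ∈ M, ∃! p : Fin q, v ∈ A p)
    (hAcomp : ∀ (p : Fin q), ∀ v ∈ A p, ∀ w ∈ M,
      ((SimpleGraph.fromEdgeSet (↑(Sj ∩ within M) : Set (Sym2 V))).Reachable v w ↔ w ∈ A p))
    (F : Finset (Sym2 V))
    (hF : F = Sk ∩ Finset.univ.filter fun e =>
      (∃ p : Fin q, e ∈ cutOf (A p)) ∧ e ∉ cutOf M)
    (B : Fin q → Finset V)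
    (hB : ∀ p : Fin q, B p = Finset.univ.filter fun v =>
      ∃ a ∈ A p, (SimpleGraph.fromEdgeSet (↑(Sk \ F) : Set (Sym2 V))).Reachable a v)
    (Y : Finset (Sym2 V))
    (hY : Y = Finset.univ.filter fun e => ∃ u ∈ M, ∃ w ∈ M,
      ∃ pth : (SimpleGraph.fromEdgeSet (↑Sj : Set (Sym2 V))).Walk u w,
        pth.IsPath ∧ e ∈ pth.edges) :
    ∃ p : Fin q, ∃ e ∈ Y ∩ cutOf (B p),
      ∀ p' : Fin q, p' ≠ p → ∀ u ∈ A p, ∀ w ∈ A p',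
        ∀ pth : (SimpleGraph.fromEdgeSet (↑Sj : Set (Sym2 V))).Walk u w,
          pth.IsPath → e ∈ pth.edges := by
  classical
  obtain ⟨hSjdiag, hSjconn, hSjcard⟩ := hSj
  obtain ⟨hSkdiag, hSkconn, hSkcard⟩ := hSk
  have hAuniq : ∀ (p p' : Fin q) (v : V), v ∈ A p → v ∈ A p' → p = p' := by
    intro p p' v hv hv'
    obtain ⟨p₀, -, hu⟩ := hApart v (hAsub p hv)
    exact (hu p hv).trans (hu p' hv').symm
  have hAB : ∀ (p : Fin q) (v : V), v ∈ A p → v ∈ B p := by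
    intro p v hv
    rw [hB p]
    exact Finset.mem_filter.mpr ⟨Finset.mem_univ _, v, hv, Reachable.refl _⟩
  -- disjointness of the B p
  have hBdisj : ∀ (p p' : Fin q), p ≠ p' → ∀ z ∈ B p, z ∉ B p' := by
    intro p p' hpp z hz hz'
    rw [hB p] at hz
    rw [hB p'] at hz'
    obtain ⟨-, a, ha, hra⟩ := Finset.mem_filter.mp hz
    obtain ⟨-, a', ha', hra'⟩ := Finset.mem_filter.mp hz'
    have hreach : (fromEdgeSet (↑(Sk \ F) : Set (Sym2 V))).Reachable a a' := hra.trans hra'.symm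
    have haM : a ∈ M := hAsub p ha
    have ha'M : a' ∈ M := hAsub p' ha'
    have hwalkM : ∃ W : (fromEdgeSet (↑Sk : Set (Sym2 V))).Walk a a', ∀ v ∈ W.support, v ∈ M := by
      obtain ⟨ω⟩ := hconn.preconnected ⟨a, haM⟩ ⟨a', ha'M⟩
      have haux : ∀ (x y : (↑M : Set V))
          (_ : (SimpleGraph.induce (↑M : Set V) (fromEdgeSet (↑Sk : Set (Sym2 V)))).Walk x y),
          ∃ W : (fromEdgeSet (↑Sk : Set (Sym2 V))).Walk x.1 y.1, ∀ v ∈ W.support, v ∈ M := by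
        intro x y ω'
        induction ω' with
        | nil =>
          refine ⟨Walk.nil, ?_⟩
          intro v hv
          rw [Walk.support_nil, List.mem_singleton] at hv
          subst hv
          exact Finset.mem_coe.mp (Subtype.coe_prop _)
        | @cons x0 z0 y0 h' q' ih =>
          obtain ⟨W, hW⟩ := ih
          have hadj : (fromEdgeSet (↑Sk : Set (Sym2 V))).Adj x0.1 z0.1 := SimpleGraph.comap_adj.mp h'
          refine ⟨Walk.cons hadj W, ?_⟩
          intro v hv
          rw [Walk.support_cons, List.mem_cons] at hv
          rcases hv with hv | hv
          · subst hv; exact Finset.mem_coe.mp (Subtype.coe_prop _)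
          · exact hW v hv
      exact haux ⟨a, haM⟩ ⟨a', ha'M⟩ ω
    obtain ⟨W, hWM⟩ := hwalkM
    have hPpath := W.bypass_isPath
    have hPsupp : ∀ v ∈ W.bypass.support, v ∈ M := fun v hv => hWM v (W.support_bypass_subset hv)
    have ha'notp : a' ∉ A p := fun hc => hpp (hAuniq p p' a' hc ha')
    obtain ⟨x₁, x₂, hmem, hx₁, hx₂⟩ := exists_cross W.bypass (A p) ha ha'notp
    have hfSk : s(x₁,x₂) ∈ Sk ∧ ¬ (s(x₁,x₂)).IsDiag := by
      have h0 := W.bypass.edges_subset_edgeSet hmem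
      rw [edgeSet_fromEdgeSet] at h0
      exact ⟨Finset.mem_coe.mp h0.1, h0.2⟩
    have hx12 : x₁ ≠ x₂ := by
      intro hc
      exact hfSk.2 (by rw [Sym2.mk_isDiag_iff]; exact hc)
    have hx₁M : x₁ ∈ M := hPsupp x₁ (Walk.fst_mem_support_of_mem_edges _ hmem)
    have hx₂M : x₂ ∈ M := hPsupp x₂ (Walk.snd_mem_support_of_mem_edges _ hmem)
    have hfF : s(x₁,x₂) ∈ F := by
      rw [hF]
      refine Finset.mem_inter.mpr ⟨hfSk.1, Finset.mem_filter.mpr ⟨Finset.mem_univ _, ⟨p, ?_⟩, ?_⟩⟩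
      · exact Finset.mem_filter.mpr ⟨Finset.mem_univ _, x₁, x₂, rfl, hx₁, hx₂⟩
      · intro hcut
        obtain ⟨-, u, v, huv, hu, hv⟩ := Finset.mem_filter.mp hcut
        rcases Sym2.eq_iff.mp huv with ⟨h1, h2⟩ | ⟨h1, h2⟩
        · exact hv (h2 ▸ hx₂M)
        · exact hv (h1 ▸ hx₁M)
    have hbr := bridge_of_card hSkconn hSkcard hfSk.1 hx12
    have hsub : Sk \ F ⊆ Sk.erase s(x₁,x₂) := by
      intro z' hzm
      rw [Finset.mem_sdiff] at hzm
      exact Finset.mem_erase.mpr ⟨fun hc => hzm.2 (hc ▸ hfF), hzm.1⟩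
    have hre : (fromEdgeSet (↑(Sk.erase s(x₁,x₂)) : Set (Sym2 V))).Reachable a a' :=
      hreach.mono (fromEdgeSet_mono (Finset.coe_subset.mpr hsub))
    rcases split_reach W.bypass hPpath.edges_nodup hmem with ⟨r1, r2⟩ | ⟨r1, r2⟩
    · exact hbr (r1.symm.trans (hre.trans r2.symm))
    · exact hbr (r2.trans (hre.symm.trans r1))
  -- connectivity inside a class avoiding a non-class edge
  have hclass : ∀ (p : Fin q) (f : Sym2 V),
      (∀ x y : V, s(x,y) = f → ¬(x ∈ A p ∧ y ∈ A p)) →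
      ∀ a ∈ A p, ∀ b ∈ A p, (fromEdgeSet (↑(Sj.erase f) : Set (Sym2 V))).Reachable a b := by
    intro p f hf a ha b hb
    obtain ⟨ω⟩ := (hAcomp p a ha b (hAsub p hb)).mpr hb
    have haux : ∀ (u w : V) (_ : (fromEdgeSet (↑(Sj ∩ within M) : Set (Sym2 V))).Walk u w),
        u ∈ A p → (fromEdgeSet (↑(Sj.erase f) : Set (Sym2 V))).Reachable u w := by
      intro u w ω'
      induction ω' with
      | nil => exact fun _ => Reachable.refl _
      | @cons u' v' w' h' q' ih =>
        intro hu
        have h'' := h'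
        rw [fromEdgeSet_adj] at h''
        have hmem2 := Finset.mem_coe.mp h''.1
        rw [Finset.mem_inter] at hmem2
        have hvM : v' ∈ M := by
          have h3 := (Finset.mem_filter.mp hmem2.2).2.2
          exact h3 v' (Sym2.mem_mk_right u' v')
        have hvA : v' ∈ A p := (hAcomp p u' hu v' hvM).mp h'.reachable
        have hadj2 : (fromEdgeSet (↑(Sj.erase f) : Set (Sym2 V))).Adj u' v' := by
          rw [fromEdgeSet_adj]
          exact ⟨Finset.mem_coe.mpr (Finset.mem_erase.mpr
            ⟨fun hc => hf u' v' hc ⟨hu, hvA⟩, hmem2.1⟩), h''.2⟩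
        exact hadj2.reachable.trans (ih hvA)
    exact haux a b ω ha
  -- the key monotonicity lemma for components
  have hkey : ∀ (u₀ v₀ n₁ n₂ : V), s(n₁,n₂) ≠ s(u₀,v₀) →
      ¬ (fromEdgeSet (↑(Sj.erase s(n₁,n₂)) : Set (Sym2 V))).Reachable n₁ u₀ →
      (fromEdgeSet (↑(Sj.erase s(u₀,v₀)) : Set (Sym2 V))).Reachable n₁ u₀ →
      ∀ z, (fromEdgeSet (↑(Sj.erase s(n₁,n₂)) : Set (Sym2 V))).Reachable z n₁ →
      (fromEdgeSet (↑(Sj.erase s(u₀,v₀)) : Set (Sym2 V))).Reachable z u₀ := by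
    intro u₀ v₀ n₁ n₂ hne hnr hn₁ z hz
    obtain ⟨P0⟩ := hz
    have hsub1 : (Sj.erase s(n₁,n₂)).erase s(u₀,v₀) ⊆ Sj.erase s(u₀,v₀) :=
      Finset.erase_subset_erase _ (Finset.erase_subset _ _)
    have hsub2 : (Sj.erase s(n₁,n₂)).erase s(u₀,v₀) ⊆ Sj.erase s(n₁,n₂) :=
      Finset.erase_subset _ _
    by_cases he : s(u₀,v₀) ∈ P0.bypass.edges
    · rcases split_reach P0.bypass P0.bypass_isPath.edges_nodup he with ⟨r1, r2⟩ | ⟨r1, r2⟩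
      · exact r1.mono (fromEdgeSet_mono (Finset.coe_subset.mpr hsub1))
      · exact absurd (r2.mono (fromEdgeSet_mono (Finset.coe_subset.mpr hsub2))).symm hnr
    · have h0 := reach_erase_of_walk P0.bypass he
      exact (h0.mono (fromEdgeSet_mono (Finset.coe_subset.mpr hsub1))).trans hn₁
  -- edges of suitable paths lie in Y
  have hYsub : ∀ (x z : V), x ∈ M →
      (∃ m2 ∈ M, ∃ (W2 : (fromEdgeSet (↑Sj : Set (Sym2 V))).Walk z m2), ∀ g ∈ W2.edges, g ∈ Y) →
      ∀ (f : Sym2 V) (Q : (fromEdgeSet (↑(Sj.erase f) : Set (Sym2 V))).Walk x z), Q.IsPath →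
      ∀ g ∈ Q.edges, g ∈ Y := by
    intro x z hx hzw f Q hQ g hg
    obtain ⟨m2, hm2, W2, hW2Y⟩ := hzw
    induction g using Sym2.ind with
    | _ g₁ g₂ =>
    have hQedges : ∀ g' ∈ Q.edges, g' ∈ (fromEdgeSet (↑Sj : Set (Sym2 V))).edgeSet := by
      intro g' hg'
      have h0 := Q.edges_subset_edgeSet hg'
      rw [edgeSet_fromEdgeSet] at h0 ⊢
      exact ⟨Finset.mem_coe.mpr (Finset.mem_of_mem_erase (Finset.mem_coe.mp h0.1)), h0.2⟩
    have hgQ' : s(g₁,g₂) ∈ (Q.transfer _ hQedges).edges := by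
      rw [Walk.edges_transfer]; exact hg
    have hgSj : s(g₁,g₂) ∈ Sj ∧ ¬ (s(g₁,g₂)).IsDiag := by
      have h0 := (Q.transfer _ hQedges).edges_subset_edgeSet hgQ'
      rw [edgeSet_fromEdgeSet] at h0
      exact ⟨Finset.mem_coe.mp h0.1, h0.2⟩
    have hg12 : g₁ ≠ g₂ := by
      intro hc
      exact hgSj.2 (by rw [Sym2.mk_isDiag_iff]; exact hc)
    have hbr := bridge_of_card hSjconn hSjcard hgSj.1 hg12
    by_cases hgW2 : s(g₁,g₂) ∈ W2.edges
    · exact hW2Y _ hgW2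
    · by_cases hgP2 : s(g₁,g₂) ∈ ((Q.transfer _ hQedges).append W2).bypass.edges
      · rw [hY]
        exact Finset.mem_filter.mpr ⟨Finset.mem_univ _, x, hx, m2, hm2,
          ((Q.transfer _ hQedges).append W2).bypass,
          ((Q.transfer _ hQedges).append W2).bypass_isPath, hgP2⟩
      · exfalso
        have hre1 := reach_erase_of_walk ((Q.transfer _ hQedges).append W2).bypass hgP2
        have hre2 := reach_erase_of_walk W2 hgW2
        have hQpath : (Q.transfer _ hQedges).IsPath := by
          rw [Walk.isPath_def, Walk.support_transfer]
          exact (Walk.isPath_def _).mp hQ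
        rcases split_reach (Q.transfer _ hQedges) hQpath.edges_nodup hgQ' with ⟨r1, r2⟩ | ⟨r1, r2⟩
        · exact hbr (r1.symm.trans (hre1.trans (hre2.symm.trans r2.symm)))
        · exact hbr (r1.symm.trans (hre1.trans (hre2.symm.trans r2.symm))).symm
  -- existence of a candidate
  have hex : ∃ (p : Fin q) (n₁ n₂ : V), Cnd Sj Y A B p n₁ n₂ := by
    have h0 : (0 : ℕ) < q := by omega
    have h1 : (1 : ℕ) < q := by omega
    have hp01 : (⟨0, h0⟩ : Fin q) ≠ ⟨1, h1⟩ := by simp [Fin.ext_iff]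
    obtain ⟨a, ha⟩ := hAne ⟨0, h0⟩
    obtain ⟨b, hb⟩ := hAne ⟨1, h1⟩
    obtain ⟨W0⟩ := hSjconn.preconnected a b
    have hbB : b ∉ B ⟨0, h0⟩ := hBdisj ⟨1, h1⟩ ⟨0, h0⟩ (Ne.symm hp01) b (hAB ⟨1, h1⟩ b hb)
    obtain ⟨n₁, n₂, hmem, hiff, hnot, r1, r2⟩ :=
      cross_orient W0.bypass W0.bypass_isPath (B ⟨0, h0⟩) (hAB ⟨0, h0⟩ a ha) hbB
    refine ⟨⟨0, h0⟩, n₁, n₂, (Cnd_def ..).mpr ⟨?_, hiff, ?_⟩⟩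
    · rw [hY]
      exact Finset.mem_filter.mpr ⟨Finset.mem_univ _, a, hAsub _ ha, b, hAsub _ hb,
        W0.bypass, W0.bypass_isPath, hmem⟩
    · intro a'' ha''
      have hone : ∀ x y : V, s(x,y) = s(n₁,n₂) → ¬(x ∈ A ⟨0, h0⟩ ∧ y ∈ A ⟨0, h0⟩) := by
        intro x y hxy hxyA
        rcases Sym2.eq_iff.mp hxy with ⟨e1, e2⟩ | ⟨e1, e2⟩ <;> rcases hnot with hn | hn
        · exact hn (e1 ▸ hAB _ x hxyA.1)
        · exact hn (e2 ▸ hAB _ y hxyA.2)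
        · exact hn (e2 ▸ hAB _ y hxyA.2)
        · exact hn (e1 ▸ hAB _ x hxyA.1)
      exact (hclass _ s(n₁,n₂) hone a'' ha'' a ha).trans r1
  -- extremal choice
  have hexn : ∃ n : ℕ, ∃ (p : Fin q) (n₁ n₂ : V),
      Cnd Sj Y A B p n₁ n₂ ∧ meas Sj B p n₁ n₂ = n := by
    obtain ⟨p, n₁, n₂, hC⟩ := hex
    exact ⟨_, p, n₁, n₂, hC, rfl⟩
  obtain ⟨p, u₀, v₀, hC, hmeq⟩ := Nat.find_spec hexn
  have hmin : ∀ (p' : Fin q) (n₁ n₂ : V), Cnd Sj Y A B p' n₁ n₂ →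
      Nat.find hexn ≤ meas Sj B p' n₁ n₂ :=
    fun p' n₁ n₂ hC' => Nat.find_min' hexn ⟨p', n₁, n₂, hC', rfl⟩
  rw [Cnd_def] at hC
  obtain ⟨hCY, hCiff, hCnear⟩ := hC
  -- main claim: all other classes lie on the far side of e
  have hside : ∀ p' : Fin q, p' ≠ p → ∀ w ∈ A p',
      ¬ (fromEdgeSet (↑(Sj.erase s(u₀,v₀)) : Set (Sym2 V))).Reachable w u₀ := by
    intro p' hp' w hw hreach
    by_cases hu₀B : u₀ ∈ B p'
    · -- tie-breaking case
      have hu₀notBp : u₀ ∉ B p := hBdisj p' p hp' u₀ hu₀B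
      have hv₀B : v₀ ∈ B p := by
        by_contra hcon
        exact hu₀notBp (hCiff.mpr hcon)
      have hv₀notB' : v₀ ∉ B p' := hBdisj p p' (Ne.symm hp') v₀ hv₀B
      have hCnd' : Cnd Sj Y A B p' u₀ v₀ := by
        refine (Cnd_def ..).mpr ⟨hCY, iff_of_true hu₀B hv₀notB', ?_⟩
        intro a'' ha''
        have hone : ∀ x y : V, s(x,y) = s(u₀,v₀) → ¬(x ∈ A p' ∧ y ∈ A p') := by
          intro x y hxy hxyA
          rcases Sym2.eq_iff.mp hxy with ⟨e1, e2⟩ | ⟨e1, e2⟩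
          · exact hv₀notB' (e2 ▸ hAB p' y hxyA.2)
          · exact hv₀notB' (e1 ▸ hAB p' x hxyA.1)
        exact (hclass p' s(u₀,v₀) hone a'' ha'' w hw).trans hreach
      have h1 := hmin p' u₀ v₀ hCnd'
      rw [meas_def, if_pos hu₀B] at h1
      rw [meas_def, if_neg hu₀notBp] at hmeq
      omega
    · -- descent case
      obtain ⟨Q0⟩ := hreach
      obtain ⟨n₁, n₂, hmem, hiff', hnot', r1, r2⟩ :=
        cross_orient Q0.bypass Q0.bypass_isPath (B p') (hAB p' w hw) hu₀B
      have hedge : s(n₁,n₂) ∈ Sj.erase s(u₀,v₀) ∧ ¬ (s(n₁,n₂)).IsDiag := by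
        have h0 := Q0.bypass.edges_subset_edgeSet hmem
        rw [edgeSet_fromEdgeSet] at h0
        exact ⟨Finset.mem_coe.mp h0.1, h0.2⟩
      have hne' : s(n₁,n₂) ≠ s(u₀,v₀) := (Finset.mem_erase.mp hedge.1).1
      have hn₁n₂ : n₁ ≠ n₂ := by
        intro hc
        exact hedge.2 (by rw [Sym2.mk_isDiag_iff]; exact hc)
      have hSjmem : s(n₁,n₂) ∈ Sj := Finset.mem_of_mem_erase hedge.1
      have hbr' := bridge_of_card hSjconn hSjcard hSjmem hn₁n₂
      have hsubA : (Sj.erase s(u₀,v₀)).erase s(n₁,n₂) ⊆ Sj.erase s(n₁,n₂) :=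
        Finset.erase_subset_erase _ (Finset.erase_subset _ _)
      have r1' : (fromEdgeSet (↑(Sj.erase s(n₁,n₂)) : Set (Sym2 V))).Reachable w n₁ :=
        r1.mono (fromEdgeSet_mono (Finset.coe_subset.mpr hsubA))
      have r2' : (fromEdgeSet (↑(Sj.erase s(n₁,n₂)) : Set (Sym2 V))).Reachable n₂ u₀ :=
        r2.mono (fromEdgeSet_mono (Finset.coe_subset.mpr hsubA))
      have hnr : ¬ (fromEdgeSet (↑(Sj.erase s(n₁,n₂)) : Set (Sym2 V))).Reachable n₁ u₀ := by
        intro hcon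
        exact hbr' (hcon.trans r2'.symm)
      have hYe' : s(n₁,n₂) ∈ Y := by
        have hCYm := hCY
        rw [hY] at hCYm
        obtain ⟨-, m1, hm1, m2, hm2, R, hR, heR⟩ := Finset.mem_filter.mp hCYm
        have hu₀supp : u₀ ∈ R.support := Walk.fst_mem_support_of_mem_edges R heR
        have hRY : ∀ g ∈ R.edges, g ∈ Y := by
          intro g hg
          rw [hY]
          exact Finset.mem_filter.mpr ⟨Finset.mem_univ _, m1, hm1, m2, hm2, R, hR, hg⟩
        exact hYsub w u₀ (hAsub p' hw)
          ⟨m2, hm2, R.dropUntil u₀ hu₀supp,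
            fun g hg => hRY g (Walk.edges_dropUntil_subset R hu₀supp hg)⟩
          s(u₀,v₀) Q0.bypass Q0.bypass_isPath s(n₁,n₂) hmem
      have hCnd' : Cnd Sj Y A B p' n₁ n₂ := by
        refine (Cnd_def ..).mpr ⟨hYe', hiff', ?_⟩
        intro a'' ha''
        have hone : ∀ x y : V, s(x,y) = s(n₁,n₂) → ¬(x ∈ A p' ∧ y ∈ A p') := by
          intro x y hxy hxyA
          rcases Sym2.eq_iff.mp hxy with ⟨e1, e2⟩ | ⟨e1, e2⟩ <;> rcases hnot' with hn | hn
          · exact hn (e1 ▸ hAB _ x hxyA.1)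
          · exact hn (e2 ▸ hAB _ y hxyA.2)
          · exact hn (e2 ▸ hAB _ y hxyA.2)
          · exact hn (e1 ▸ hAB _ x hxyA.1)
        exact (hclass p' s(n₁,n₂) hone a'' ha'' w hw).trans r1'
      have hn₁u₀ : (fromEdgeSet (↑(Sj.erase s(u₀,v₀)) : Set (Sym2 V))).Reachable n₁ u₀ := by
        have hn₁supp : n₁ ∈ Q0.bypass.support := Walk.fst_mem_support_of_mem_edges _ hmem
        exact ⟨Q0.bypass.dropUntil n₁ hn₁supp⟩
      have hNsub : (Finset.univ.filter fun z =>
            (fromEdgeSet (↑(Sj.erase s(n₁,n₂)) : Set (Sym2 V))).Reachable z n₁) ⊆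
          (Finset.univ.filter fun z =>
            (fromEdgeSet (↑(Sj.erase s(u₀,v₀)) : Set (Sym2 V))).Reachable z u₀) := by
        intro z hz
        rw [Finset.mem_filter] at hz ⊢
        exact ⟨Finset.mem_univ _, hkey u₀ v₀ n₁ n₂ hne' hnr hn₁u₀ z hz.2⟩
      have hu₀in : u₀ ∈ (Finset.univ.filter fun z =>
          (fromEdgeSet (↑(Sj.erase s(u₀,v₀)) : Set (Sym2 V))).Reachable z u₀) :=
        Finset.mem_filter.mpr ⟨Finset.mem_univ _, Reachable.refl _⟩
      have hu₀out : u₀ ∉ (Finset.univ.filter fun z =>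
          (fromEdgeSet (↑(Sj.erase s(n₁,n₂)) : Set (Sym2 V))).Reachable z n₁) := by
        rw [Finset.mem_filter]
        rintro ⟨-, hcon⟩
        exact hnr hcon.symm
      have hcardlt := Finset.card_lt_card
        ((Finset.ssubset_iff_of_subset hNsub).mpr ⟨u₀, hu₀in, hu₀out⟩)
      have h1 := hmin p' n₁ n₂ hCnd'
      rw [meas_def] at h1
      rw [meas_def] at hmeq
      have hb1 : (if n₁ ∈ B p' then (0:ℕ) else 1) ≤ 1 := by split <;> omega
      omega
  -- conclusion
  refine ⟨p, s(u₀,v₀), Finset.mem_inter.mpr ⟨hCY, ?_⟩, ?_⟩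
  · refine Finset.mem_filter.mpr ⟨Finset.mem_univ _, ?_⟩
    by_cases hu : u₀ ∈ B p
    · exact ⟨u₀, v₀, rfl, hu, hCiff.mp hu⟩
    · have hv : v₀ ∈ B p := by
        by_contra hc
        exact hu (hCiff.mpr hc)
      exact ⟨v₀, u₀, Sym2.eq_swap, hv, hu⟩
  · intro p' hp' u hu w hw pth hpth
    by_contra hcon
    have hr := reach_erase_of_walk pth hcon
    exact hside p' hp' w hw (hr.symm.trans (hCnear u hu))

end STT

end
end
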